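/- arXiv:0910.2033 — 6 statements merged into one kernel-verified Lean document; each statement's English description precedes it below -/
import Mathlib

section
/- If A is an n×m Boolean matrix and B is an m×n Boolean matrix, neither having a zero row or zero column, then the Boolean matrix product AB is primitive (i.e., some power of AB is the all-ones matrix) if and only if BA is primitive. -/
/-- Boolean matrix product over the Boolean semiring, modeled with `Prop` entries. -/
def bmul {l m n : ℕ} (A : Fin l → Fin m → Prop) (B : Fin m → Fin n → Prop) :
    Fin l → Fin n → Prop := fun i j => ∃ k, A i k ∧ B k j

/-- Transpose of a Boolean matrix. -/
def btrans {m n : ℕ} (A : Fin m → Fin n → Prop) : Fin n → Fin m → Prop := fun i j => A j i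

/-- Boolean matrix power. -/
def bpow {n : ℕ} (A : Fin n → Fin n → Prop) : ℕ → (Fin n → Fin n → Prop)
  | 0 => fun i j => i = j
  | k + 1 => bmul A (bpow A k)

/-- The all-ones Boolean matrix `J`. -/
def bJ {m n : ℕ} : Fin m → Fin n → Prop := fun _ _ => True

/-- A square Boolean matrix is primitive if some positive power is the all-ones matrix. -/
def IsPrimitive {n : ℕ} (A : Fin n → Fin n → Prop) : Prop :=
  ∃ r, 1 ≤ r ∧ bpow A r = bJ

/-- The scrambling index: least `k ≥ 1` with `A^k (Aᵗ)^k = J`. -/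
noncomputable def scram {n : ℕ} (A : Fin n → Fin n → Prop) : ℕ :=
  sInf {k | 1 ≤ k ∧ bmul (bpow A k) (bpow (btrans A) k) = bJ}

/-- The Boolean rank: least `b ≥ 1` admitting a factorization through dimension `b`. -/
noncomputable def brank {n m : ℕ} (M : Fin n → Fin m → Prop) : ℕ :=
  sInf {b | 0 < b ∧ ∃ (A : Fin n → Fin b → Prop) (B : Fin b → Fin m → Prop), M = bmul A B}

/-- `A` has no zero row. -/
def NoZeroRow {m n : ℕ} (A : Fin m → Fin n → Prop) : Prop := ∀ i, ∃ j, A i j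

/-- `A` has no zero column. -/
def NoZeroCol {m n : ℕ} (A : Fin m → Fin n → Prop) : Prop := ∀ j, ∃ i, A i j

/-- The Wielandt matrix `W_b` (0-indexed): arcs `i → i+1`, `b-2 → 0`, `b-1 → 0`. -/
def Wielandt (b : ℕ) : Fin b → Fin b → Prop :=
  fun i j => j.val = i.val + 1 ∨ (i.val = b - 2 ∧ j.val = 0) ∨ (i.val = b - 1 ∧ j.val = 0)

lemma bmul_assoc {a b c d : ℕ} (A : Fin a → Fin b → Prop) (B : Fin b → Fin c → Prop)
    (C : Fin c → Fin d → Prop) : bmul (bmul A B) C = bmul A (bmul B C) := by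
  funext i j
  apply propext
  constructor
  · rintro ⟨k, ⟨l, hA, hB⟩, hC⟩; exact ⟨l, hA, k, hB, hC⟩
  · rintro ⟨l, hA, k, hB, hC⟩; exact ⟨k, ⟨l, hA, hB⟩, hC⟩

lemma bmul_id_right {a : ℕ} {b : ℕ} (M : Fin a → Fin b → Prop) (N : Fin b → Fin b → Prop) :
    bmul M (bpow N 0) = M := by
  funext i j
  apply propext
  constructor
  · rintro ⟨k, hM, hk⟩; cases hk; exact hM
  · intro h; exact ⟨j, h, rfl⟩

lemma bmul_id_left {a : ℕ} {b : ℕ} (M : Fin a → Fin b → Prop) (N : Fin a → Fin a → Prop) :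
    bmul (bpow N 0) M = M := by
  funext i j
  apply propext
  constructor
  · rintro ⟨k, hk, hM⟩; cases hk; exact hM
  · intro h; exact ⟨i, rfl, h⟩

lemma bpow_shift {n m : ℕ} (A : Fin n → Fin m → Prop) (B : Fin m → Fin n → Prop) :
    ∀ k, bpow (bmul B A) (k + 1) = bmul B (bmul (bpow (bmul A B) k) A)
  | 0 => by
    show bmul (bmul B A) (bpow (bmul B A) 0) = _
    rw [bmul_id_right, bmul_id_left]
  | k + 1 => by
    show bmul (bmul B A) (bpow (bmul B A) (k + 1)) = _
    rw [bpow_shift A B k]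
    show _ = bmul B (bmul (bmul (bmul A B) (bpow (bmul A B) k)) A)
    rw [bmul_assoc (bmul A B), bmul_assoc A B, ← bmul_assoc B A]

lemma primitive_swap {n m : ℕ} (A : Fin n → Fin m → Prop) (B : Fin m → Fin n → Prop)
    (hAc : NoZeroCol A) (hBr : NoZeroRow B) :
    IsPrimitive (bmul A B) → IsPrimitive (bmul B A) := by
  rintro ⟨r, hr, hJ⟩
  refine ⟨r + 1, by omega, ?_⟩
  rw [bpow_shift, hJ]
  funext i j
  apply propext
  constructor
  · intro _; trivial
  · intro _
    obtain ⟨k, hB⟩ := hBr i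
    obtain ⟨l, hA⟩ := hAc j
    exact ⟨k, hB, l, trivial, hA⟩

theorem primitive_mul_comm {n m : ℕ} (A : Fin n → Fin m → Prop) (B : Fin m → Fin n → Prop)
    (hAr : NoZeroRow A) (hAc : NoZeroCol A) (hBr : NoZeroRow B) (hBc : NoZeroCol B) :
    IsPrimitive (bmul A B) ↔ IsPrimitive (bmul B A) := by
  exact ⟨primitive_swap A B hAc hBr, primitive_swap B A hBc hAr⟩
end

section
/- Let A be a primitive n×n Boolean matrix with n ≥ 2. Then the scrambling index satisfies k(A) ≤ ⌈((n−1)² + 1)/2⌉. -/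
section ScramAux
variable {n : ℕ} (A : Fin n → Fin n → Prop)
attribute [local instance] Classical.propDecidable

lemma bpow_zero_iff (u v : Fin n) : bpow A 0 u v ↔ u = v := Iff.rfl

lemma bpow_succ_iff (m : ℕ) (u v : Fin n) :
    bpow A (m+1) u v ↔ ∃ k, A u k ∧ bpow A m k v := Iff.rfl

lemma bpow_add_iff (a b : ℕ) (u v : Fin n) :
    bpow A (a+b) u v ↔ ∃ w, bpow A a u w ∧ bpow A b w v := by
  induction a generalizing u with
  | zero =>
      simp only [Nat.zero_add]
      constructor
      · intro h; exact ⟨u, rfl, h⟩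
      · rintro ⟨w, hw, h⟩; cases hw; exact h
  | succ a ih =>
      have h1 : a + 1 + b = (a + b) + 1 := by omega
      rw [h1]
      constructor
      · rintro ⟨k, hk, hkb⟩
        rcases (ih k).1 hkb with ⟨w, h2, h3⟩
        exact ⟨w, ⟨k, hk, h2⟩, h3⟩
      · rintro ⟨w, ⟨k, hk, h2⟩, h3⟩
        exact ⟨k, hk, (ih k).2 ⟨w, h2, h3⟩⟩

lemma bpow_succ_right_iff (m : ℕ) (u v : Fin n) :
    bpow A (m+1) u v ↔ ∃ k, bpow A m u k ∧ A k v := by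
  rw [bpow_add_iff A m 1]
  constructor
  · rintro ⟨w, hw, k, hk, hkv⟩; cases hkv; exact ⟨w, hw, hk⟩
  · rintro ⟨k, hk, hkv⟩; exact ⟨k, hk, v, hkv, rfl⟩

lemma btrans_bpow_iff (m : ℕ) (u v : Fin n) :
    bpow (btrans A) m u v ↔ bpow A m v u := by
  induction m generalizing u v with
  | zero => exact ⟨fun h => h.symm, fun h => h.symm⟩
  | succ m ih =>
      rw [bpow_succ_iff, bpow_succ_right_iff]
      constructor
      · rintro ⟨k, hk, hkv⟩; exact ⟨k, (ih k v).1 hkv, hk⟩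
      · rintro ⟨k, hk, hkv⟩; exact ⟨k, hkv, (ih k v).2 hk⟩

lemma exists_bpow (hnz : ∀ u, ∃ x, A u x) (m : ℕ) (u : Fin n) : ∃ v, bpow A m u v := by
  induction m generalizing u with
  | zero => exact ⟨u, rfl⟩
  | succ m ih =>
      rcases hnz u with ⟨x, hx⟩
      rcases ih x with ⟨v, hv⟩
      exact ⟨v, x, hx, hv⟩

lemma no_zero_row {r : ℕ} (hr1 : 1 ≤ r) (hrJ : bpow A r = bJ) : ∀ u, ∃ x, A u x := by
  intro u
  obtain ⟨r', rfl⟩ : ∃ r', r = r' + 1 := ⟨r - 1, by omega⟩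
  have h : bpow A (r' + 1) u u := by rw [hrJ]; trivial
  rcases h with ⟨k, hk, -⟩
  exact ⟨k, hk⟩

lemma bpow_full {r : ℕ} (hr1 : 1 ≤ r) (hrJ : bpow A r = bJ) :
    ∀ M, r ≤ M → ∀ u v, bpow A M u v := by
  intro M hM
  induction M with
  | zero => omega
  | succ M ih =>
      rcases Nat.lt_or_ge r (M+1) with h | h
      · intro u v
        rcases no_zero_row A hr1 hrJ u with ⟨x, hx⟩
        exact ⟨x, hx, ih (by omega) x v⟩
      · intro u v
        have : r = M + 1 := by omega
        rw [← this, hrJ]; trivial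


/-- Walks as functions. -/
def IsWalkN (m : ℕ) (f : ℕ → Fin n) : Prop := ∀ t, t < m → A (f t) (f (t+1))

lemma isWalkN_mono {m m' : ℕ} {f : ℕ → Fin n} (h : IsWalkN A m f) (hm : m' ≤ m) :
    IsWalkN A m' f := fun t ht => h t (lt_of_lt_of_le ht hm)

lemma bpow_iff_walk (m : ℕ) (u v : Fin n) :
    bpow A m u v ↔ ∃ f : ℕ → Fin n, f 0 = u ∧ f m = v ∧ IsWalkN A m f := by
  induction m generalizing u with
  | zero =>
      constructor
      · intro h
        refine ⟨fun _ => u, rfl, ?_, fun t ht => absurd ht (Nat.not_lt_zero t)⟩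
        exact h.symm ▸ rfl
      · rintro ⟨f, h0, hm, -⟩
        show u = v
        rw [← h0, hm]
  | succ m ih =>
      constructor
      · rintro ⟨k, hk, hkv⟩
        rcases (ih k).1 hkv with ⟨g, hg0, hgm, hgw⟩
        refine ⟨fun t => if t = 0 then u else g (t-1), by simp, ?_, ?_⟩
        · simp only [Nat.succ_ne_zero, if_false]; simpa using hgm
        · intro t ht
          rcases Nat.eq_zero_or_pos t with rfl | htpos
          · simpa [hg0] using hk
          · have h1 : ¬ (t = 0) := by omega
            have h2 : ¬ (t + 1 = 0) := by omega
            simp only [h1, h2, if_false]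
            have h3 : t + 1 - 1 = (t - 1) + 1 := by omega
            rw [h3]
            exact hgw (t-1) (by omega)
      · rintro ⟨f, h0, hm, hw⟩
        refine ⟨f 1, by rw [← h0]; exact hw 0 (by omega), ?_⟩
        refine (ih (f 1)).2 ⟨fun t => f (t+1), rfl, hm, fun t ht => hw (t+1) (by omega)⟩

attribute [local instance] Classical.propDecidable

/-- The set of vertices reachable from `c` by a walk of length exactly `m`. -/
noncomputable def Rset (c : Fin n) (m : ℕ) : Finset (Fin n) :=
  Finset.univ.filter (fun x => bpow A m c x)

lemma mem_Rset {c x : Fin n} {m : ℕ} : x ∈ Rset A c m ↔ bpow A m c x := by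
  simp [Rset]

lemma Rset_congr_add {c₁ c₂ : Fin n} {m₁ m₂ : ℕ}
    (h : Rset A c₁ m₁ = Rset A c₂ m₂) (d : ℕ) :
    Rset A c₁ (m₁ + d) = Rset A c₂ (m₂ + d) := by
  ext x
  rw [mem_Rset, mem_Rset, bpow_add_iff A m₁ d, bpow_add_iff A m₂ d]
  constructor
  · rintro ⟨y, hy, hyx⟩
    have : y ∈ Rset A c₂ m₂ := h ▸ (mem_Rset A).2 hy
    exact ⟨y, (mem_Rset A).1 this, hyx⟩
  · rintro ⟨y, hy, hyx⟩
    have : y ∈ Rset A c₁ m₁ := h ▸ (mem_Rset A).2 hy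
    exact ⟨y, (mem_Rset A).1 this, hyx⟩

lemma Rset_mono_cycle {s : ℕ} {c : Fin n} (hc : bpow A s c c) (m : ℕ) :
    Rset A c m ⊆ Rset A c (m + s) := by
  intro x hx
  rw [mem_Rset] at hx ⊢
  have : s + m = m + s := by omega
  rw [← this, bpow_add_iff]
  exact ⟨c, hc, hx⟩

lemma Rset_mono_mul {s : ℕ} {c : Fin n} (hc : bpow A s c c) (m k : ℕ) :
    Rset A c m ⊆ Rset A c (m + k * s) := by
  induction k with
  | zero => simp
  | succ k ih =>
      have h1 : m + (k+1) * s = (m + k * s) + s := by ring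
      rw [h1]
      exact ih.trans (Rset_mono_cycle A hc _)

lemma Rset_univ_of_ge {r : ℕ} (hr1 : 1 ≤ r) (hfull : ∀ M, r ≤ M → ∀ u v, bpow A M u v)
    {c : Fin n} {M : ℕ} (hM : r ≤ M) : Rset A c M = Finset.univ := by
  ext x; simp only [Finset.mem_univ, iff_true]
  exact (mem_Rset A).2 (hfull M hM c x)

lemma Rset_strict {r s : ℕ} (hr1 : 1 ≤ r) (hfull : ∀ M, r ≤ M → ∀ u v, bpow A M u v)
    (hs1 : 1 ≤ s) {c : Fin n} (hc : bpow A s c c) {m : ℕ}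
    (hne : Rset A c m ≠ Finset.univ) : Rset A c m ⊂ Rset A c (m + s) := by
  refine Finset.ssubset_iff_subset_ne.mpr ⟨Rset_mono_cycle A hc m, fun heq => ?_⟩
  -- stabilization
  have hstab : ∀ j : ℕ, Rset A c (m + j * s) = Rset A c m := by
    intro j
    induction j with
    | zero => simp
    | succ j ih =>
        have h1 : m + (j+1) * s = (m + j * s) + s := by ring
        have h2 := Rset_congr_add A ih s
        rw [h1, h2, ← heq]
  have h3 : r ≤ m + r * s := by
    calc r ≤ r * s := Nat.le_mul_of_pos_right r hs1
    _ ≤ m + r * s := by omega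
  have h4 := Rset_univ_of_ge A hr1 hfull (c := c) h3
  rw [hstab r] at h4
  exact hne h4


/-- Cardinality growth along the cycle. -/
lemma Rset_card_growth {r s : ℕ} (hr1 : 1 ≤ r) (hfull : ∀ M, r ≤ M → ∀ u v, bpow A M u v)
    (hs1 : 1 ≤ s) {c : Fin n} (hc : bpow A s c c) {m₀ : ℕ} (hne : (Rset A c m₀).Nonempty) :
    ∀ j : ℕ, Rset A c (m₀ + j * s) = Finset.univ ∨ j + 1 ≤ (Rset A c (m₀ + j * s)).card := by
  intro j
  induction j with
  | zero => right; simpa using Finset.Nonempty.card_pos hne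
  | succ j ih =>
      have hstep : m₀ + (j+1) * s = (m₀ + j * s) + s := by ring
      rcases ih with h | h
      · left
        have h2 : Rset A c (m₀ + j*s) ⊆ Rset A c (m₀ + (j+1) * s) := by
          rw [hstep]; exact Rset_mono_cycle A hc _
        rw [h] at h2
        exact Finset.univ_subset_iff.mp h2
      · by_cases hu : Rset A c (m₀ + (j+1) * s) = Finset.univ
        · left; exact hu
        · right
          have hne2 : Rset A c (m₀ + j * s) ≠ Finset.univ := by
            intro habs
            have h2 : Rset A c (m₀ + j*s) ⊆ Rset A c (m₀ + (j+1) * s) := by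
              rw [hstep]; exact Rset_mono_cycle A hc _
            rw [habs] at h2
            exact hu (Finset.univ_subset_iff.mp h2)
          have h3 := Rset_strict A hr1 hfull hs1 hc hne2
          rw [← hstep] at h3
          have := Finset.card_lt_card h3
          omega

/-- Two walkers meet at time `T`. -/
def MeetAt (u v : Fin n) (T : ℕ) : Prop := ∃ x, bpow A T u x ∧ bpow A T v x

lemma meetAt_symm {u v : Fin n} {T : ℕ} (h : MeetAt A u v T) : MeetAt A v u T := by
  rcases h with ⟨x, h1, h2⟩; exact ⟨x, h2, h1⟩

lemma meetAt_mono (hnz : ∀ u, ∃ x, A u x) {u v : Fin n} {T T' : ℕ} (hT : T ≤ T')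
    (h : MeetAt A u v T) : MeetAt A u v T' := by
  obtain ⟨d, rfl⟩ : ∃ d, T' = T + d := ⟨T' - T, by omega⟩
  clear hT
  induction d with
  | zero => exact h
  | succ d ih =>
      rcases ih with ⟨x, h1, h2⟩
      rcases hnz x with ⟨y, hy⟩
      have e : T + (d+1) = (T + d) + 1 := by omega
      rw [e]
      exact ⟨y, (bpow_succ_right_iff A _ u y).2 ⟨x, h1, hy⟩,
             (bpow_succ_right_iff A _ v y).2 ⟨x, h2, hy⟩⟩

/-- Compose landing walk with a common reachable vertex. -/
lemma meet_of_common {u v c c' : Fin n} {a M : ℕ}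
    (hu : bpow A a u c) (hv : bpow A a v c') {x : Fin n}
    (hx : x ∈ Rset A c M) (hx' : x ∈ Rset A c' M) : MeetAt A u v (a + M) := by
  refine ⟨x, ?_, ?_⟩
  · exact (bpow_add_iff A a M u x).2 ⟨c, hu, (mem_Rset A).1 hx⟩
  · exact (bpow_add_iff A a M v x).2 ⟨c', hv, (mem_Rset A).1 hx'⟩

/-- The counting meeting lemma (used for odd `n`). -/
lemma meet_counting {r s : ℕ} (hr1 : 1 ≤ r) (hfull : ∀ M, r ≤ M → ∀ u v, bpow A M u v)
    (hs1 : 1 ≤ s) {u v c c' : Fin n} {a : ℕ}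
    (hu : bpow A a u c) (hv : bpow A a v c')
    (hc : bpow A s c c) (hc' : bpow A s c' c')
    {J : ℕ} (hJ : n + 1 ≤ 2 * (J + 1)) : MeetAt A u v (a + J * s) := by
  have hne : (Rset A c 0).Nonempty := ⟨c, (mem_Rset A).2 rfl⟩
  have hne' : (Rset A c' 0).Nonempty := ⟨c', (mem_Rset A).2 rfl⟩
  have hX := Rset_card_growth A hr1 hfull hs1 hc hne J
  have hY := Rset_card_growth A hr1 hfull hs1 hc' hne' J
  simp only [Nat.zero_add] at hX hY
  -- nonemptiness of both sets
  have hXne : (Rset A c (J*s)).Nonempty := by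
    have := Rset_mono_mul A hc 0 J
    simp only [Nat.zero_add] at this
    exact hne.mono this
  have hYne : (Rset A c' (J*s)).Nonempty := by
    have := Rset_mono_mul A hc' 0 J
    simp only [Nat.zero_add] at this
    exact hne'.mono this
  have hinter : ((Rset A c (J*s)) ∩ (Rset A c' (J*s))).Nonempty := by
    rcases hX with h | h
    · rcases hYne with ⟨y, hy⟩
      exact ⟨y, Finset.mem_inter.2 ⟨by rw [h]; exact Finset.mem_univ y, hy⟩⟩
    · rcases hY with h' | h'
      · rcases hXne with ⟨y, hy⟩
        exact ⟨y, Finset.mem_inter.2 ⟨hy, by rw [h']; exact Finset.mem_univ y⟩⟩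
      · have hcard := Finset.card_union_add_card_inter (Rset A c (J*s)) (Rset A c' (J*s))
        have hle : (Rset A c (J*s) ∪ Rset A c' (J*s)).card ≤ n := by
          simpa using Finset.card_le_univ (Rset A c (J*s) ∪ Rset A c' (J*s))
        have : 1 ≤ (Rset A c (J*s) ∩ Rset A c' (J*s)).card := by omega
        exact Finset.card_pos.mp (by omega)
  rcases hinter with ⟨x, hx⟩
  rcases Finset.mem_inter.1 hx with ⟨h1, h2⟩
  exact meet_of_common A hu hv h1 h2


/-- The "swap" meeting lemma used for even `n`. -/
lemma meet_even {r s : ℕ} (hr1 : 1 ≤ r) (hfull : ∀ M, r ≤ M → ∀ u v, bpow A M u v)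
    (hnz : ∀ u, ∃ x, A u x) (hs1 : 1 ≤ s)
    {u v c c' : Fin n} {a : ℕ}
    (hu : bpow A a u c) (hv : bpow A a v c')
    (hc : bpow A s c c) (hc' : bpow A s c' c')
    {δ : ℕ} (hδ : bpow A δ c c') (hδ1 : 1 ≤ δ)
    {J : ℕ} (hJn : n = 2 * (J + 1)) :
    ∃ T, T ≤ a + J * s + δ ∧ MeetAt A u v T := by
  by_contra hcon
  push_neg at hcon
  -- disjointness of reachable sets at all times `≤ J*s + δ`
  have hdis : ∀ M, M ≤ J * s + δ → ∀ x, x ∈ Rset A c M → x ∈ Rset A c' M → False := by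
    intro M hM x hx hx'
    exact hcon (a + M) (by omega) (meet_of_common A hu hv hx hx')
  have hne : (Rset A c 0).Nonempty := ⟨c, (mem_Rset A).2 rfl⟩
  have hne' : (Rset A c' 0).Nonempty := ⟨c', (mem_Rset A).2 rfl⟩
  have hXne : (Rset A c (J*s)).Nonempty := by
    have h := Rset_mono_mul A hc 0 J
    simp only [Nat.zero_add] at h
    exact hne.mono h
  have hYne : (Rset A c' (J*s)).Nonempty := by
    have h := Rset_mono_mul A hc' 0 J
    simp only [Nat.zero_add] at h
    exact hne'.mono h
  -- `X` and `Y`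
  have hXg := Rset_card_growth A hr1 hfull hs1 hc hne J
  have hYg := Rset_card_growth A hr1 hfull hs1 hc' hne' J
  simp only [Nat.zero_add] at hXg hYg
  have hXcard : J + 1 ≤ (Rset A c (J*s)).card := by
    rcases hXg with h | h
    · exfalso
      rcases hYne with ⟨y, hy⟩
      exact hdis (J*s) (by omega) y (by rw [h]; exact Finset.mem_univ y) hy
    · exact h
  have hYcard : J + 1 ≤ (Rset A c' (J*s)).card := by
    rcases hYg with h | h
    · exfalso
      rcases hXne with ⟨y, hy⟩
      exact hdis (J*s) (by omega) y hy (by rw [h]; exact Finset.mem_univ y)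
    · exact h
  have hXYdisj : Rset A c (J*s) ∩ Rset A c' (J*s) = ∅ := by
    rw [Finset.eq_empty_iff_forall_notMem]
    intro x hx
    rcases Finset.mem_inter.1 hx with ⟨h1, h2⟩
    exact hdis (J*s) (by omega) x h1 h2
  have hcard_un : (Rset A c (J*s) ∪ Rset A c' (J*s)).card ≤ n := by
    have h := Finset.card_le_univ (Rset A c (J*s) ∪ Rset A c' (J*s))
    rwa [Fintype.card_fin] at h
  have hUI := Finset.card_union_add_card_inter (Rset A c (J*s)) (Rset A c' (J*s))
  rw [hXYdisj] at hUI
  simp only [Finset.card_empty, Nat.add_zero] at hUI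
  have hXexact : (Rset A c (J*s)).card = J + 1 := by omega
  have hYexact : (Rset A c' (J*s)).card = J + 1 := by omega
  have hXYuniv : Rset A c (J*s) ∪ Rset A c' (J*s) = Finset.univ := by
    apply Finset.eq_univ_of_card
    rw [hUI, hXexact, hYexact, Fintype.card_fin]
    omega
  -- `X₂` and `Y₂`
  have hYX₂ : Rset A c' (J*s) ⊆ Rset A c (J*s + δ) := by
    intro x hx
    rw [mem_Rset] at hx ⊢
    have e : J*s + δ = δ + J*s := by omega
    rw [e, bpow_add_iff]
    exact ⟨c', hδ, hx⟩
  have hY₂card : J + 1 ≤ (Rset A c' (J*s + δ)).card := by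
    have hneδ : (Rset A c' δ).Nonempty := by
      rcases exists_bpow A hnz δ c' with ⟨x, hx⟩
      exact ⟨x, (mem_Rset A).2 hx⟩
    have h := Rset_card_growth A hr1 hfull hs1 hc' hneδ J
    have e : δ + J * s = J * s + δ := by omega
    rw [e] at h
    rcases h with h | h
    · exfalso
      rcases hYne with ⟨y, hy⟩
      have hy2 : y ∈ Rset A c (J*s + δ) := hYX₂ hy
      exact hdis (J*s + δ) (by omega) y hy2 (by rw [h]; exact Finset.mem_univ y)
    · exact h
  have hX₂Y₂disj : Rset A c (J*s+δ) ∩ Rset A c' (J*s+δ) = ∅ := by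
    rw [Finset.eq_empty_iff_forall_notMem]
    intro x hx
    rcases Finset.mem_inter.1 hx with ⟨h1, h2⟩
    exact hdis (J*s+δ) (by omega) x h1 h2
  have hcard_un2 : (Rset A c (J*s+δ) ∪ Rset A c' (J*s+δ)).card ≤ n := by
    have h := Finset.card_le_univ (Rset A c (J*s+δ) ∪ Rset A c' (J*s+δ))
    rwa [Fintype.card_fin] at h
  have hUI2 := Finset.card_union_add_card_inter (Rset A c (J*s+δ)) (Rset A c' (J*s+δ))
  rw [hX₂Y₂disj] at hUI2
  simp only [Finset.card_empty, Nat.add_zero] at hUI2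
  have hX₂card : (Rset A c (J*s+δ)).card ≤ J + 1 := by omega
  -- X₂ = Y
  have hX₂Y : Rset A c (J*s+δ) = Rset A c' (J*s) := by
    refine (Finset.eq_of_subset_of_card_le hYX₂ ?_).symm
    omega
  -- Y₂ = X
  have hY₂X : Rset A c' (J*s+δ) = Rset A c (J*s) := by
    have hsub : Rset A c' (J*s+δ) ⊆ Rset A c (J*s) := by
      intro x hx
      have hxuniv : x ∈ Rset A c (J*s) ∪ Rset A c' (J*s) := by
        rw [hXYuniv]; exact Finset.mem_univ x
      rcases Finset.mem_union.1 hxuniv with h | h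
      · exact h
      · exfalso
        have hx2 : x ∈ Rset A c (J*s+δ) := hYX₂ h
        rw [Finset.eq_empty_iff_forall_notMem] at hX₂Y₂disj
        exact hX₂Y₂disj x (Finset.mem_inter.2 ⟨hx2, hx⟩)
    refine Finset.eq_of_subset_of_card_le hsub ?_
    omega
  -- alternation
  have K1 : ∀ d, Rset A c ((J*s + δ) + d) = Rset A c' ((J*s) + d) :=
    fun d => Rset_congr_add A hX₂Y d
  have K2 : ∀ d, Rset A c' ((J*s + δ) + d) = Rset A c ((J*s) + d) :=
    fun d => Rset_congr_add A hY₂X d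
  have halt : ∀ i : ℕ,
      (Rset A c (J*s + i*δ) = Rset A c (J*s) ∧ Rset A c' (J*s + i*δ) = Rset A c' (J*s)) ∨
      (Rset A c (J*s + i*δ) = Rset A c' (J*s) ∧ Rset A c' (J*s + i*δ) = Rset A c (J*s)) := by
    intro i
    induction i with
    | zero => left; constructor <;> simp
    | succ i ih =>
        have e : J*s + (i+1)*δ = (J*s + δ) + i*δ := by ring
        rw [e, K1 (i*δ), K2 (i*δ)]
        rcases ih with ⟨h1, h2⟩ | ⟨h1, h2⟩
        · right; exact ⟨h2, h1⟩
        · left; exact ⟨h2, h1⟩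
  -- contradiction via strict growth
  have hXneuniv : Rset A c (J*s) ≠ Finset.univ := by
    intro habs
    have : (Rset A c (J*s)).card = n := by
      rw [habs, Finset.card_univ, Fintype.card_fin]
    omega
  have hstrict := Rset_strict A hr1 hfull hs1 hc hXneuniv
  have hgrow : J + 2 ≤ (Rset A c (J*s + s)).card := by
    have := Finset.card_lt_card hstrict
    omega
  obtain ⟨δ', rfl⟩ : ∃ δ', δ = δ' + 1 := ⟨δ - 1, by omega⟩
  have hmono := Rset_mono_mul A hc (J*s + s) δ'
  have e2 : J*s + s + δ' * s = J*s + s*(δ'+1) := by ring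
  rw [e2] at hmono
  have hbig : J + 2 ≤ (Rset A c (J*s + s*(δ'+1))).card :=
    le_trans hgrow (Finset.card_le_card hmono)
  rcases halt s with ⟨h1, -⟩ | ⟨h1, -⟩
  · rw [h1] at hbig; omega
  · rw [h1] at hbig; omega

lemma exists_cycle_system (hn : 2 ≤ n) {r : ℕ} (hr1 : 1 ≤ r)
    (hfull : ∀ M, r ≤ M → ∀ u v, bpow A M u v) :
    ∃ (s : ℕ) (w : ℕ → Fin n), 1 ≤ s ∧ s < n ∧
      (∀ a d, bpow A d (w a) (w (a + d))) ∧
      (∀ x y : ℕ, w x = w y ↔ x % s = y % s) ∧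
      (∀ a b : ℕ, ∃ δ, δ < s ∧ w (a + δ) = w b) ∧
      (∀ u, ∃ i, bpow A (n - s) u (w i)) := by
  have hv₀ : (0:ℕ) < n := by omega
  set v₀ : Fin n := ⟨0, hv₀⟩ with hv₀def
  set S : Set ℕ := {m | 1 ≤ m ∧ ∃ v, bpow A m v v} with hSdef
  have hSne : S.Nonempty := ⟨r, hr1, v₀, hfull r le_rfl v₀ v₀⟩
  set s : ℕ := sInf S with hsdef
  obtain ⟨hs1, v₁, hv₁⟩ : 1 ≤ s ∧ ∃ v, bpow A s v v := Nat.sInf_mem hSne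
  have hmin : ∀ m, 1 ≤ m → m < s → ¬∃ v, bpow A m v v := by
    intro m hm1 hms hex
    have : s ≤ m := Nat.sInf_le ⟨hm1, hex⟩
    omega
  obtain ⟨f, hf0, hfs, hfw⟩ := (bpow_iff_walk A s v₁ v₁).1 hv₁
  set w : ℕ → Fin n := fun t => f (t % s) with hwdef
  have hw_eq_of : ∀ x y : ℕ, x % s = y % s → w x = w y := by
    intro x y h; simp only [hwdef, h]
  have hwstep : ∀ a, A (w a) (w (a+1)) := by
    intro a
    have hmod : (a % s + 1) % s = (a + 1) % s := Nat.mod_add_mod a s 1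
    have hlt : a % s < s := Nat.mod_lt a hs1
    by_cases h : a % s + 1 < s
    · have h2 : (a+1) % s = a % s + 1 := by rw [← hmod, Nat.mod_eq_of_lt h]
      show A (f (a % s)) (f ((a+1) % s))
      rw [h2]
      exact hfw (a % s) (by omega)
    · have h3 : a % s + 1 = s := by omega
      have h2 : (a+1) % s = 0 := by rw [← hmod, h3, Nat.mod_self]
      show A (f (a % s)) (f ((a+1) % s))
      rw [h2, hf0, ← hfs]
      have harc := hfw (a % s) (by omega)
      rw [h3] at harc
      exact harc
  have hwwalk : ∀ a d, bpow A d (w a) (w (a + d)) := by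
    intro a d
    induction d with
    | zero => show w a = w (a + 0); rw [Nat.add_zero]
    | succ d ih =>
        have e : a + (d+1) = (a + d) + 1 := by omega
        rw [e]
        exact (bpow_succ_right_iff A d (w a) (w (a+d+1))).2 ⟨w (a+d), ih, hwstep (a+d)⟩
  -- injectivity on residues
  have hwinj_aux : ∀ x y : ℕ, x % s < y % s → w x ≠ w y := by
    intro x y hlt heq
    have hys : y % s < s := Nat.mod_lt y hs1
    set d := y % s - x % s with hddef
    have hd1 : 1 ≤ d := by omega
    have hds : d < s := by omega
    apply hmin d hd1 hds
    refine ⟨w x, ?_⟩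
    have h1 : bpow A d (w (x % s)) (w (x % s + d)) := hwwalk (x % s) d
    have h2 : w (x % s) = w x := hw_eq_of _ _ (Nat.mod_mod_of_dvd x (dvd_refl s))
    have h3 : w (x % s + d) = w y := hw_eq_of _ _ (by
      have : x % s + d = y % s := by omega
      rw [this]
      exact (Nat.mod_eq_of_lt hys))
    rw [h2, h3] at h1
    rw [← heq] at h1
    exact h1
  have hw_iff : ∀ x y : ℕ, w x = w y ↔ x % s = y % s := by
    intro x y
    constructor
    · intro h
      rcases lt_trichotomy (x % s) (y % s) with hl | he | hl
      · exact absurd h (hwinj_aux x y hl)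
      · exact he
      · exact absurd h.symm (hwinj_aux y x hl)
    · exact hw_eq_of x y
  -- the shift lemma
  have hshift : ∀ a b : ℕ, ∃ δ, δ < s ∧ w (a + δ) = w b := by
    intro a b
    set t := b % s + (s - a % s) with htdef
    have hmod : a % s < s := Nat.mod_lt a hs1
    have hbmod : b % s < s := Nat.mod_lt b hs1
    have hdm : s * (a / s) + a % s = a := Nat.div_add_mod a s
    have hat : a + t = s * (a / s) + (b % s + s) := by omega
    have h2 : (a + t) % s = b % s := by
      rw [hat, Nat.mul_add_mod, Nat.add_mod_right, Nat.mod_eq_of_lt hbmod]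
    refine ⟨t % s, Nat.mod_lt t hs1, ?_⟩
    have h3 : (a + t % s) % s = (a + t) % s := by
      conv_lhs => rw [Nat.add_mod a (t % s) s]
      rw [Nat.mod_mod_of_dvd t (dvd_refl s)]
      exact (Nat.add_mod a t s).symm
    apply hw_eq_of
    rw [h3, h2]
  -- `s ≤ n` via injectivity on `[0, s)`
  have hinjOn : Set.InjOn w ↑(Finset.range s) := by
    intro x hx y hy hxy
    simp only [Finset.coe_range, Set.mem_Iio] at hx hy
    have := (hw_iff x y).1 hxy
    rwa [Nat.mod_eq_of_lt hx, Nat.mod_eq_of_lt hy] at this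
  have hCimg : ((Finset.range s).image w).card = s := by
    rw [Finset.card_image_of_injOn hinjOn, Finset.card_range]
  have hsn : s ≤ n := by
    have h := Finset.card_le_univ ((Finset.range s).image w)
    rwa [hCimg, Fintype.card_fin] at h
  have hslt : s < n := by
    rcases Nat.lt_or_ge s n with h | h
    · exact h
    · exfalso
      have hseq : s = n := by omega
      -- `w` is surjective
      have hsurj : ∀ x : Fin n, ∃ b, b < s ∧ w b = x := by
        intro x
        have huniv : (Finset.range s).image w = Finset.univ := by
          apply Finset.eq_univ_of_card
          rw [hCimg, Fintype.card_fin, hseq]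
        have : x ∈ (Finset.range s).image w := by rw [huniv]; exact Finset.mem_univ x
        rcases Finset.mem_image.1 this with ⟨b, hb, hbx⟩
        exact ⟨b, Finset.mem_range.1 hb, hbx⟩
      by_cases hcyc : ∀ a : ℕ, ∀ y : Fin n, A (w a) y → y = w (a+1)
      · have hdet : ∀ m z, bpow A m (w 0) z → z = w m := by
          intro m
          induction m with
          | zero => intro z hz; exact hz.symm
          | succ m ih =>
              intro z hz
              rcases (bpow_succ_right_iff A m (w 0) z).1 hz with ⟨k, hk, harc⟩
              have hkw := ih k hk
              rw [hkw] at harc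
              exact hcyc m z harc
        have e1 : w 1 = w r := hdet r (w 1) (hfull r le_rfl (w 0) (w 1))
        have e2 : w 2 = w r := hdet r (w 2) (hfull r le_rfl (w 0) (w 2))
        have h12 : (1:ℕ) % s = 2 % s := (hw_iff 1 2).1 (by rw [e1, e2])
        have hs2 : 2 ≤ s := by omega
        rcases Nat.lt_or_ge 2 s with hlt2 | hle2
        · rw [Nat.mod_eq_of_lt (by omega), Nat.mod_eq_of_lt hlt2] at h12
          omega
        · have hs2' : s = 2 := by omega
          rw [hs2'] at h12
          omega
      · push_neg at hcyc
        rcases hcyc with ⟨a, y, harc, hne⟩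
        rcases hsurj y with ⟨b, hb, rfl⟩
        rcases hshift b a with ⟨δ', hδ'lt, hδ'eq⟩
        have hclosed : bpow A (δ'+1) (w a) (w a) := by
          refine ⟨w b, harc, ?_⟩
          have := hwwalk b δ'
          rwa [hδ'eq] at this
        have hmem : s ≤ δ' + 1 := Nat.sInf_le ⟨by omega, w a, hclosed⟩
        have hδ'val : δ' = s - 1 := by omega
        apply hne
        have h4 : (b + δ') % s = a % s := (hw_iff _ _).1 hδ'eq
        apply hw_eq_of
        have h5 : ((b + δ') + 1) % s = (a + 1) % s := by
          rw [← Nat.mod_add_mod (b + δ') s 1, h4, Nat.mod_add_mod]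
        have h6 : (b + δ') + 1 = b + s := by omega
        rw [h6, Nat.add_mod_right] at h5
        exact h5
  -- the landing lemma
  have hland : ∀ u, ∃ i, bpow A (n - s) u (w i) := by
    intro u
    set Dset : Set ℕ := {m | ∃ b, bpow A m u (w b)} with hDdef
    have hDne : Dset.Nonempty := ⟨r, 0, hfull r le_rfl u (w 0)⟩
    set d : ℕ := sInf Dset with hddef
    obtain ⟨b₀, hdw⟩ : ∃ b, bpow A d u (w b) := Nat.sInf_mem hDne
    have hdle : d ≤ n - s := by
      by_contra hgt
      push_neg at hgt
      obtain ⟨f', hf'0, hf'd, hf'w⟩ := (bpow_iff_walk A d u (w b₀)).1 hdw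
      have h1 : ∀ t, t < d → ∀ b, f' t ≠ w b := by
        intro t ht b heq
        have htD : t ∈ Dset := ⟨b, (bpow_iff_walk A t u (w b)).2
          ⟨f', hf'0, heq, isWalkN_mono A hf'w (le_of_lt ht)⟩⟩
        have : d ≤ t := Nat.sInf_le htD
        omega
      have h2 : ∀ x y, x < y → y < d → f' x ≠ f' y := by
        intro x y hxy hyd heq
        set g : ℕ → Fin n := fun t => if t ≤ x then f' t else f' (t + (y - x)) with hgdef
        have hg0 : g 0 = u := by
          simp only [hgdef]
          rw [if_pos (Nat.zero_le x)]
          exact hf'0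
        set d' : ℕ := d - (y - x) with hd'def
        have hxd' : x < d' := by omega
        have hgd' : g d' = w b₀ := by
          have hnle : ¬ (d' ≤ x) := by omega
          simp only [hgdef]
          rw [if_neg hnle]
          have e : d' + (y - x) = d := by omega
          rw [e, hf'd]
        have hgw : IsWalkN A d' g := by
          intro t htlt
          simp only [hgdef]
          rcases Nat.lt_trichotomy t x with h | h | h
          · rw [if_pos (by omega : t ≤ x), if_pos (by omega : t + 1 ≤ x)]
            exact hf'w t (by omega)
          · subst h
            rw [if_pos (le_refl t), if_neg (by omega : ¬ (t + 1 ≤ t))]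
            have e : t + 1 + (y - t) = y + 1 := by omega
            rw [e, heq]
            exact hf'w y (by omega)
          · rw [if_neg (by omega : ¬ (t ≤ x)), if_neg (by omega : ¬ (t + 1 ≤ x))]
            have e : t + 1 + (y - x) = (t + (y - x)) + 1 := by omega
            rw [e]
            exact hf'w (t + (y - x)) (by omega)
        have hd'D : d' ∈ Dset := ⟨b₀, (bpow_iff_walk A d' u (w b₀)).2 ⟨g, hg0, hgd', hgw⟩⟩
        have : d ≤ d' := Nat.sInf_le hd'D
        omega
      have hinj2 : Set.InjOn f' ↑(Finset.range d) := by
        intro x hx y hy hxy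
        simp only [Finset.coe_range, Set.mem_Iio] at hx hy
        rcases Nat.lt_trichotomy x y with h | h | h
        · exact absurd hxy (h2 x y h hy)
        · exact h
        · exact absurd hxy.symm (h2 y x h hx)
      have hFimg : ((Finset.range d).image f').card = d := by
        rw [Finset.card_image_of_injOn hinj2, Finset.card_range]
      have hdisj : Disjoint ((Finset.range d).image f') ((Finset.range s).image w) := by
        rw [Finset.disjoint_left]
        rintro x hx hx2
        rcases Finset.mem_image.1 hx with ⟨t, ht, rfl⟩
        rcases Finset.mem_image.1 hx2 with ⟨b, hb, hbe⟩
        exact h1 t (Finset.mem_range.1 ht) b hbe.symm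
      have hcard := Finset.card_union_of_disjoint hdisj
      have hle : (((Finset.range d).image f') ∪ ((Finset.range s).image w)).card ≤ n := by
        have h := Finset.card_le_univ (((Finset.range d).image f') ∪ ((Finset.range s).image w))
        rwa [Fintype.card_fin] at h
      rw [hcard, hFimg, hCimg] at hle
      omega
    refine ⟨b₀ + (n - s - d), ?_⟩
    have hb : bpow A (d + (n - s - d)) u (w (b₀ + (n - s - d))) :=
      (bpow_add_iff A d (n - s - d) u (w (b₀ + (n - s - d)))).2
        ⟨w b₀, hdw, hwwalk b₀ (n - s - d)⟩
    have e : d + (n - s - d) = n - s := by omega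
    rwa [e] at hb
  exact ⟨s, w, hs1, hslt, hwwalk, hw_iff, hshift, hland⟩


end ScramAux

lemma arith_base {n s : ℕ} (hn : 2 ≤ n) (hs1 : 1 ≤ s) :
    n - s ≤ ((n-1)^2+2)/2 := by
  set a := n - 1 with ha
  have h1 : n - s ≤ a := by omega
  have h2 : a ≤ (a^2+2)/2 := by
    have h3 : 2*a ≤ a^2 + 2 := by
      have := sq_nonneg ((a:ℤ) - 1)
      have h4 : (a:ℤ)^2 + 2 - 2*a = ((a:ℤ)-1)^2 + 1 := by ring
      have h5 : 2*(a:ℤ) ≤ (a:ℤ)^2 + 2 := by nlinarith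
      exact_mod_cast h5
    omega
  omega

lemma arith_odd {n s : ℕ} (hn : 2 ≤ n) (hs1 : 1 ≤ s) (hslt : s < n) (ho : n % 2 = 1) :
    n - s + ((n-1)/2)*s ≤ ((n-1)^2+2)/2 := by
  obtain ⟨m, rfl⟩ : ∃ m, n = 2*m+1 := ⟨n/2, by omega⟩
  have hm1 : 1 ≤ m := by omega
  have hJ : (2*m+1-1)/2 = m := by omega
  have hsq : (2*m+1-1)^2 = 4*(m*m) := by
    have : 2*m+1-1 = 2*m := by omega
    rw [this]; ring
  have hK : ((2*m+1-1)^2+2)/2 = 2*(m*m)+1 := by rw [hsq]; omega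
  rw [hJ, hK]
  have hs2m : s ≤ 2*m := by omega
  zify [show s ≤ 2*m+1 by omega]
  have h1 : (s:ℤ) ≤ 2*m := by exact_mod_cast hs2m
  have h2 : (1:ℤ) ≤ m := by exact_mod_cast hm1
  nlinarith [mul_nonneg (by linarith : (0:ℤ) ≤ 2*(m:ℤ) - s) (by linarith : (0:ℤ) ≤ (m:ℤ) - 1)]

lemma arith_even {n s δ : ℕ} (hn : 2 ≤ n) (hs1 : 1 ≤ s) (hslt : s < n) (he : n % 2 = 0)
    (hδ1 : 1 ≤ δ) (hδs : 2*δ ≤ s) :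
    n - s + (n/2 - 1)*s + δ ≤ ((n-1)^2+2)/2 := by
  obtain ⟨m, rfl⟩ : ∃ m, n = 2*m+2 := ⟨n/2 - 1, by omega⟩
  have hJ : (2*m+2)/2 - 1 = m := by omega
  have hsq : (2*m+2-1)^2 = 4*(m*m)+4*m+1 := by
    have : 2*m+2-1 = 2*m+1 := by omega
    rw [this]; ring
  have hK : ((2*m+2-1)^2+2)/2 = 2*(m*m)+2*m+1 := by rw [hsq]; omega
  rw [hJ, hK]
  rcases Nat.eq_zero_or_pos m with rfl | hm1
  · omega
  have hs2m : s ≤ 2*m+1 := by omega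
  zify [show s ≤ 2*m+2 by omega]
  have h1 : (s:ℤ) ≤ 2*m+1 := by exact_mod_cast hs2m
  have h2 : (1:ℤ) ≤ m := by exact_mod_cast hm1
  have h3 : 2*(δ:ℤ) ≤ s := by exact_mod_cast hδs
  have h4 : (1:ℤ) ≤ s := by exact_mod_cast hs1
  nlinarith [mul_nonneg (by linarith : (0:ℤ) ≤ 2*(m:ℤ)+1 - s) (by linarith : (0:ℤ) ≤ 2*(m:ℤ) - 1)]



theorem scram_le_of_primitive {n : ℕ} (hn : 2 ≤ n) (A : Fin n → Fin n → Prop)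
    (hA : IsPrimitive A) :
    scram A ≤ ((n - 1) ^ 2 + 2) / 2 := by
  classical
  obtain ⟨r, hr1, hrJ⟩ := hA
  have hfull : ∀ M, r ≤ M → ∀ u v, bpow A M u v := bpow_full A hr1 hrJ
  have hnz : ∀ u, ∃ x, A u x := no_zero_row A hr1 hrJ
  obtain ⟨s, w, hs1, hslt, hwwalk, hw_iff, hshift, hland⟩ :=
    exists_cycle_system A hn hr1 hfull
  set K := ((n-1)^2+2)/2 with hKdef
  have hwper : ∀ a, w (a + s) = w a := fun a => (hw_iff _ _).2 (by rw [Nat.add_mod_right])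
  -- the symmetric core step
  have core : ∀ (u v c c' : Fin n) (δ : ℕ), bpow A (n-s) u c → bpow A (n-s) v c' →
      bpow A s c c → bpow A s c' c' → bpow A δ c c' → 1 ≤ δ → 2*δ ≤ s →
      ∃ T, T ≤ K ∧ MeetAt A u v T := by
    intro u v c c' δ hu hv hc hc' hδw hδ1 hδs
    rcases Nat.mod_two_eq_zero_or_one n with he | ho
    · have hJ : n = 2*((n/2 - 1)+1) := by omega
      obtain ⟨T, hT, hM⟩ := meet_even A hr1 hfull hnz hs1 hu hv hc hc' hδw hδ1 hJ
      exact ⟨T, le_trans hT (arith_even hn hs1 hslt he hδ1 hδs), hM⟩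
    · have hJ : n + 1 ≤ 2*((n-1)/2 + 1) := by omega
      exact ⟨(n-s) + ((n-1)/2)*s, arith_odd hn hs1 hslt ho,
        meet_counting A hr1 hfull hs1 hu hv hc hc' hJ⟩
  have hmeet : ∀ u v : Fin n, MeetAt A u v K := by
    intro u v
    have hTK : ∃ T, T ≤ K ∧ MeetAt A u v T := by
      obtain ⟨i, hu⟩ := hland u
      obtain ⟨b, hv⟩ := hland v
      obtain ⟨δ, hδlt, hδeq⟩ := hshift i b
      have hc : bpow A s (w i) (w i) := by have h := hwwalk i s; rwa [hwper i] at h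
      have hc' : bpow A s (w b) (w b) := by have h := hwwalk b s; rwa [hwper b] at h
      have hδwalk : bpow A δ (w i) (w b) := by have h := hwwalk i δ; rwa [hδeq] at h
      rcases Nat.eq_zero_or_pos δ with hδ0 | hδpos
      · subst hδ0
        have hib : w i = w b := by rw [← hδeq, Nat.add_zero]
        refine ⟨n - s, arith_base hn hs1, ⟨w b, ?_, hv⟩⟩
        rwa [hib] at hu
      · rcases le_or_gt (2*δ) s with hδs | hδs
        · exact core u v (w i) (w b) δ hu hv hc hc' hδwalk hδpos hδs
        · have hδ'walk : bpow A (s-δ) (w b) (w i) := by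
            have h := hwwalk (i+δ) (s-δ)
            have e : i + δ + (s - δ) = i + s := by omega
            rw [e, hwper i] at h
            rwa [hδeq] at h
          obtain ⟨T, hT, hM⟩ := core v u (w b) (w i) (s-δ) hv hu hc' hc hδ'walk
            (by omega) (by omega)
          exact ⟨T, hT, meetAt_symm A hM⟩
    obtain ⟨T, hTle, hmeetT⟩ := hTK
    exact meetAt_mono A hnz hTle hmeetT
  have hK1 : 1 ≤ K := by
    have hb := arith_base (n := n) (s := s) hn hs1
    omega
  have hKmem : K ∈ {k | 1 ≤ k ∧ bmul (bpow A k) (bpow (btrans A) k) = bJ} := by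
    refine ⟨hK1, ?_⟩
    funext i j
    apply propext
    constructor
    · intro _; trivial
    · intro _
      obtain ⟨x, hx1, hx2⟩ := hmeet i j
      exact ⟨x, hx1, (btrans_bpow_iff A K x j).2 hx2⟩
  exact Nat.sInf_le hKmem
end

section
/- Let W_n (n ≥ 3) be the Boolean adjacency matrix of the Wielandt digraph: arcs i → i+1 for 1 ≤ i ≤ n−1, plus arcs n → 1 and (n−1) → 1. Then W_n is primitive and its scrambling index equals h_n = ⌈((n−1)² + 1)/2⌉. -/
lemma bpow_succ_right {n : ℕ} (A : Fin n → Fin n → Prop) (k : ℕ) (i j : Fin n) :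
    bpow A (k+1) i j ↔ ∃ t, bpow A k i t ∧ A t j := by
  induction k generalizing i with
  | zero =>
    simp only [bpow, bmul]
    constructor
    · rintro ⟨u, h, rfl⟩; exact ⟨i, rfl, h⟩
    · rintro ⟨t, rfl, h⟩; exact ⟨j, h, rfl⟩
  | succ k ih =>
    constructor
    · rintro ⟨u, hAu, hu⟩
      obtain ⟨t, ht, hAt⟩ := (ih u).mp hu
      exact ⟨t, ⟨u, hAu, ht⟩, hAt⟩
    · rintro ⟨t, ⟨u, hAu, ht⟩, hAt⟩
      exact ⟨u, hAu, (ih u).mpr ⟨t, ht, hAt⟩⟩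

lemma bpow_btrans {n : ℕ} (A : Fin n → Fin n → Prop) (k : ℕ) (i j : Fin n) :
    bpow (btrans A) k i j ↔ bpow A k j i := by
  induction k generalizing i j with
  | zero => simp only [bpow]; exact eq_comm
  | succ k ih =>
    constructor
    · rintro ⟨t, hAt, ht⟩
      exact (bpow_succ_right A k j i).mpr ⟨t, (ih t j).mp ht, hAt⟩
    · intro h
      obtain ⟨t, ht, hAt⟩ := (bpow_succ_right A k j i).mp h
      exact ⟨t, hAt, (ih t j).mpr ht⟩


lemma mul_cases (x y : ℕ) : (x = 0 ∧ x * y = 0) ∨ (1 ≤ x ∧ y ≤ x * y) := by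
  rcases Nat.eq_zero_or_pos x with rfl | h
  · left; simp
  · right; exact ⟨h, Nat.le_mul_of_pos_left y h⟩

lemma wielandt_char {n : ℕ} (hn : 3 ≤ n) (k : ℕ) (i j : Fin n) :
    bpow (Wielandt n) k i j ↔
      ∃ a b : ℕ, k + i.val = j.val + a * (n-1) + b * n ∧
        (i.val = n - 1 → 1 ≤ b ∨ (k = 0 ∧ a = 0)) := by
  induction k generalizing i with
  | zero =>
    rw [show (bpow (Wielandt n) 0) = (fun i j : Fin n => i = j) from rfl]
    have hi := i.isLt
    have hj := j.isLt
    constructor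
    · rintro rfl
      refine ⟨0, 0, ?_, ?_⟩ <;> omega
    · rintro ⟨a, b, he, hc⟩
      have ha := mul_cases a (n-1)
      have hb := mul_cases b n
      have : i.val = j.val := by omega
      exact Fin.ext this
  | succ k ih =>
    constructor
    · rintro ⟨t, hW, ht⟩
      obtain ⟨a, b, he, hc⟩ := (ih t).mp ht
      have hi := i.isLt
      have ht' := t.isLt
      have hj := j.isLt
      rcases hW with h1 | ⟨h1, h2⟩ | ⟨h1, h2⟩
      · refine ⟨a, b, ?_, ?_⟩ <;> omega
      · refine ⟨a+1, b, ?_, ?_⟩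
        · have : (a+1) * (n-1) = a * (n-1) + (n-1) := by ring
          omega
        · omega
      · refine ⟨a, b+1, ?_, ?_⟩
        · have : (b+1) * n = b * n + n := by ring
          omega
        · omega
    · rintro ⟨a, b, he, hc⟩
      have hi := i.isLt
      have hj := j.isLt
      obtain ⟨z, hz⟩ : ∃ z : Fin n, z.val = 0 := ⟨⟨0, by omega⟩, rfl⟩
      obtain ⟨w, hw⟩ : ∃ w : Fin n, w.val = n - 1 := ⟨⟨n-1, by omega⟩, rfl⟩
      by_cases hi1 : i.val = n - 1
      · -- forced move to 0
        have hb1 : 1 ≤ b := by omega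
        obtain ⟨b', rfl⟩ : ∃ b', b = b' + 1 := ⟨b - 1, by omega⟩
        refine ⟨z, Or.inr (Or.inr ⟨hi1, hz⟩), (ih z).mpr ⟨a, b', ?_, ?_⟩⟩
        · have : (b'+1) * n = b' * n + n := by ring
          omega
        · omega
      · by_cases hi2 : i.val = n - 2
        · rcases Nat.eq_zero_or_pos a with rfl | hapos
          · rcases Nat.eq_zero_or_pos b with rfl | hbpos
            · -- k = 0, j = n-1
              refine ⟨w, Or.inl ?_, (ih w).mpr ⟨0, 0, ?_, ?_⟩⟩
              · omega
              · omega
              · intro _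
                right
                constructor
                · omega
                · rfl
            · -- go to n-1
              refine ⟨w, Or.inl ?_, (ih w).mpr ⟨0, b, ?_, ?_⟩⟩
              · omega
              · omega
              · intro _; left; exact hbpos
          · -- go to 0
            obtain ⟨a', rfl⟩ : ∃ a', a = a' + 1 := ⟨a - 1, by omega⟩
            refine ⟨z, Or.inr (Or.inl ⟨hi2, hz⟩), (ih z).mpr ⟨a', b, ?_, ?_⟩⟩
            · have : (a'+1) * (n-1) = a' * (n-1) + (n-1) := by ring
              omega
            · omega
        · -- ordinary step i → i+1
          obtain ⟨u, hu⟩ : ∃ u : Fin n, u.val = i.val + 1 := ⟨⟨i.val+1, by omega⟩, rfl⟩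
          refine ⟨u, Or.inl ?_, (ih u).mpr ⟨a, b, ?_, ?_⟩⟩
          · omega
          · omega
          · omega



lemma mk_good (m k v t s b : ℕ) (hbs : b ≤ s) (he : k + v = s*m + b + t) (hc : v = m → 1 ≤ b) :
    ∃ a b' : ℕ, k + v = t + a*m + b'*(m+1) ∧ (v = m → 1 ≤ b') := by
  refine ⟨s - b, b, ?_, hc⟩
  obtain ⟨c, rfl⟩ : ∃ c, s = b + c := ⟨s - b, by omega⟩
  have h1 : (b + c - b) * m + b * (m+1) = (b+c)*m + b := by
    have h2 : b + c - b = c := by omega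
    rw [h2]; ring
  omega

lemma upper_even (q : ℕ) (hq : 1 ≤ q) (i j : ℕ) (hij : i ≤ j) (hj : j ≤ q + q) :
    ∃ t, t ≤ q + q ∧
      (∃ a b : ℕ, ((q+q)*(q+q)+2)/2 + i = t + a*(q+q) + b*((q+q)+1) ∧ (i = q+q → 1 ≤ b)) ∧
      (∃ a b : ℕ, ((q+q)*(q+q)+2)/2 + j = t + a*(q+q) + b*((q+q)+1) ∧ (j = q+q → 1 ≤ b)) := by
  obtain ⟨p, rfl⟩ : ∃ p, q = p + 1 := ⟨q - 1, by omega⟩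
  have hdiv : (((p+1)+(p+1))*((p+1)+(p+1))+2)/2 = 2*((p+1)*(p+1))+1 := by
    have : ((p+1)+(p+1))*((p+1)+(p+1)) = 2*(2*((p+1)*(p+1))) := by ring
    omega
  rw [hdiv]
  have R0 : p * ((p+1)+(p+1)) + (2*p+2) = (p+1)*((p+1)+(p+1)) := by ring
  have R1 : (p+1) * ((p+1)+(p+1)) = 2*((p+1)*(p+1)) := by ring
  have R2 : (p+2) * ((p+1)+(p+1)) = 2*((p+1)*(p+1)) + (2*p+2) := by ring
  by_cases h1 : j ≤ i + (p+1)
  · -- E1 : t = j+1-(p+1), s = p+1 both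
    refine ⟨j + 1 - (p+1), by omega, ?_, ?_⟩
    · refine mk_good _ _ _ _ (p+1) (i + 1 - (j + 1 - (p+1))) ?_ ?_ ?_ <;> omega
    · refine mk_good _ _ _ _ (p+1) (j + 1 - (j + 1 - (p+1))) ?_ ?_ ?_ <;> omega
  · by_cases h2 : i + 1 ≤ p
    · -- E3 : t = i+p+3, s_i = p, b_i = p ; s_j = p+1, b_j = j-i-(p+2)
      refine ⟨i + p + 3, by omega, ?_, ?_⟩
      · refine mk_good _ _ _ _ p p ?_ ?_ ?_ <;> omega
      · refine mk_good _ _ _ _ (p+1) (j - i - (p+2)) ?_ ?_ ?_ <;> omega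
    · by_cases h3 : j ≤ 2*p+1
      · -- E2 : t = j-(2p+1), s_i = p+1, b_i = i+2p+2-j ; s_j = p+2, b_j = 0
        refine ⟨j - (2*p+1), by omega, ?_, ?_⟩
        · refine mk_good _ _ _ _ (p+1) (i + 2*p + 2 - j) ?_ ?_ ?_ <;> omega
        · refine mk_good _ _ _ _ (p+2) 0 ?_ ?_ ?_ <;> omega
      · -- E2' : j = 2p+2, i = p : t = 0
        refine ⟨0, by omega, ?_, ?_⟩
        · refine mk_good _ _ _ _ (p+1) (p+1) ?_ ?_ ?_ <;> omega
        · refine mk_good _ _ _ _ (p+2) 1 ?_ ?_ ?_ <;> omega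

lemma upper_odd (q : ℕ) (hq : 1 ≤ q) (i j : ℕ) (hij : i ≤ j) (hj : j ≤ 2*q+1) :
    ∃ t, t ≤ 2*q+1 ∧
      (∃ a b : ℕ, ((2*q+1)*(2*q+1)+2)/2 + i = t + a*(2*q+1) + b*((2*q+1)+1) ∧ (i = 2*q+1 → 1 ≤ b)) ∧
      (∃ a b : ℕ, ((2*q+1)*(2*q+1)+2)/2 + j = t + a*(2*q+1) + b*((2*q+1)+1) ∧ (j = 2*q+1 → 1 ≤ b)) := by
  have hdiv : ((2*q+1)*(2*q+1)+2)/2 = 2*(q*q)+2*q+1 := by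
    have : (2*q+1)*(2*q+1) = 4*(q*q)+4*q+1 := by ring
    omega
  rw [hdiv]
  have Rb : q * (2*q+1) = 2*(q*q)+q := by ring
  have Ra : (q+1) * (2*q+1) = 2*(q*q)+3*q+1 := by ring
  by_cases h1 : j ≤ i + q
  · by_cases h2 : j ≤ 2*q
    · -- O1 : t = j+1, s = q both, b_i = i+q-j, b_j = q
      refine ⟨j + 1, by omega, ?_, ?_⟩
      · refine mk_good _ _ _ _ q (i + q - j) ?_ ?_ ?_ <;> omega
      · refine mk_good _ _ _ _ q q ?_ ?_ ?_ <;> omega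
    · -- O1' : j = 2q+1, i ≥ q+1 : t = 0, s = q+1, b_i = i-q, b_j = q+1
      refine ⟨0, by omega, ?_, ?_⟩
      · refine mk_good _ _ _ _ (q+1) (i - q) ?_ ?_ ?_ <;> omega
      · refine mk_good _ _ _ _ (q+1) (q+1) ?_ ?_ ?_ <;> omega
  · by_cases h3 : i + 1 ≤ q ∨ j ≤ 2*q
    · -- O2 : t = i+1, s_i = q, b_i = q ; s_j = q+1, b_j = j-q-i-1
      refine ⟨i + 1, by omega, ?_, ?_⟩
      · refine mk_good _ _ _ _ q q ?_ ?_ ?_ <;> omega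
      · refine mk_good _ _ _ _ (q+1) (j - q - i - 1) ?_ ?_ ?_ <;> omega
    · -- O2' : i = q, j = 2q+1 : t = 0
      refine ⟨0, by omega, ?_, ?_⟩
      · refine mk_good _ _ _ _ (q+1) 0 ?_ ?_ ?_ <;> omega
      · refine mk_good _ _ _ _ (q+1) (q+1) ?_ ?_ ?_ <;> omega

lemma key_upper (m : ℕ) (hm : 2 ≤ m) (i j : ℕ) (hij : i ≤ j) (hj : j ≤ m) :
    ∃ t, t ≤ m ∧
      (∃ a b : ℕ, (m*m+2)/2 + i = t + a*m + b*(m+1) ∧ (i = m → 1 ≤ b)) ∧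
      (∃ a b : ℕ, (m*m+2)/2 + j = t + a*m + b*(m+1) ∧ (j = m → 1 ≤ b)) := by
  rcases Nat.even_or_odd m with ⟨q, rfl⟩ | ⟨q, rfl⟩
  · exact upper_even q (by omega) i j hij hj
  · exact upper_odd q (by omega) i j hij hj

lemma lower_even (p t a₁ b₁ a₂ b₂ : ℕ) (ht : t ≤ (p+1)+(p+1))
    (h1 : 2*((p+1)*(p+1)) + p = t + a₁*((p+1)+(p+1)) + b₁*((p+1)+(p+1)+1))
    (h2 : 2*((p+1)*(p+1)) + (2*p+2) = t + a₂*((p+1)+(p+1)) + b₂*((p+1)+(p+1)+1))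
    (hb2 : 1 ≤ b₂) : False := by
  have e1 : (a₁+b₁)*((p+1)+(p+1)) + b₁ = a₁*((p+1)+(p+1)) + b₁*((p+1)+(p+1)+1) := by ring
  have e2 : (a₂+b₂)*((p+1)+(p+1)) + b₂ = a₂*((p+1)+(p+1)) + b₂*((p+1)+(p+1)+1) := by ring
  have RP : p*((p+1)+(p+1)) + (2*p+2) = 2*((p+1)*(p+1)) := by ring
  have RQ : (p+1)*((p+1)+(p+1)) = 2*((p+1)*(p+1)) := by ring
  have hub1 : a₁ + b₁ ≤ p + 1 := by
    by_contra hcon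
    have hcon' : p + 2 ≤ a₁ + b₁ := by omega
    have hmul := mul_le_mul_left hcon' ((p+1)+(p+1))
    have hr : (p+2)*((p+1)+(p+1)) = 2*((p+1)*(p+1)) + (2*p+2) := by ring
    omega
  have hlb1 : p ≤ a₁ + b₁ := by
    by_contra hcon
    have hcon' : a₁ + b₁ + 1 ≤ p := by omega
    have hmul := mul_le_mul_left hcon' ((p+1)+(p+1))
    have hr : (a₁+b₁+1)*((p+1)+(p+1)) = (a₁+b₁)*((p+1)+(p+1)) + ((p+1)+(p+1)) := by ring
    omega
  have hub2 : a₂ + b₂ ≤ p + 1 := by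
    by_contra hcon
    have hcon' : p + 2 ≤ a₂ + b₂ := by omega
    have hmul := mul_le_mul_left hcon' ((p+1)+(p+1))
    have hr : (p+2)*((p+1)+(p+1)) = 2*((p+1)*(p+1)) + (2*p+2) := by ring
    omega
  have hlb2 : p + 1 ≤ a₂ + b₂ := by
    by_contra hcon
    have hcon' : a₂ + b₂ + 1 ≤ p + 1 := by omega
    have hmul := mul_le_mul_left hcon' ((p+1)+(p+1))
    have hr : (a₂+b₂+1)*((p+1)+(p+1)) = (a₂+b₂)*((p+1)+(p+1)) + ((p+1)+(p+1)) := by ring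
    omega
  have hs2 : a₂ + b₂ = p + 1 := by omega
  rw [hs2] at e2
  have hd : a₁ + b₁ = p ∨ a₁ + b₁ = p + 1 := by omega
  rcases hd with hs1 | hs1 <;> rw [hs1] at e1 <;> omega

lemma lower_odd (q t a₁ b₁ a₂ b₂ : ℕ) (hq : 1 ≤ q) (ht : t ≤ 2*q+1)
    (h1 : 2*(q*q)+2*q + q = t + a₁*(2*q+1) + b₁*(2*q+1+1))
    (h2 : 2*(q*q)+2*q + (2*q+1) = t + a₂*(2*q+1) + b₂*(2*q+1+1))
    (hb2 : 1 ≤ b₂) : False := by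
  have e1 : (a₁+b₁)*(2*q+1) + b₁ = a₁*(2*q+1) + b₁*(2*q+1+1) := by ring
  have e2 : (a₂+b₂)*(2*q+1) + b₂ = a₂*(2*q+1) + b₂*(2*q+1+1) := by ring
  have Rb : q*(2*q+1) = 2*(q*q)+q := by ring
  have Ra : (q+1)*(2*q+1) = 2*(q*q)+3*q+1 := by ring
  have hub1 : a₁ + b₁ ≤ q := by
    by_contra hcon
    have hcon' : q + 1 ≤ a₁ + b₁ := by omega
    have hmul := mul_le_mul_left hcon' (2*q+1)
    omega
  have hlb1 : q ≤ a₁ + b₁ := by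
    by_contra hcon
    have hcon' : a₁ + b₁ + 1 ≤ q := by omega
    have hmul := mul_le_mul_left hcon' (2*q+1)
    have hr : (a₁+b₁+1)*(2*q+1) = (a₁+b₁)*(2*q+1) + (2*q+1) := by ring
    omega
  have hub2 : a₂ + b₂ ≤ q + 1 := by
    by_contra hcon
    have hcon' : q + 2 ≤ a₂ + b₂ := by omega
    have hmul := mul_le_mul_left hcon' (2*q+1)
    have hr : (q+2)*(2*q+1) = 2*(q*q)+5*q+2 := by ring
    omega
  have hlb2 : q ≤ a₂ + b₂ := by
    by_contra hcon
    have hcon' : a₂ + b₂ + 1 ≤ q := by omega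
    have hmul := mul_le_mul_left hcon' (2*q+1)
    have hr : (a₂+b₂+1)*(2*q+1) = (a₂+b₂)*(2*q+1) + (2*q+1) := by ring
    omega
  have hs1 : a₁ + b₁ = q := by omega
  rw [hs1] at e1
  have hd : a₂ + b₂ = q ∨ a₂ + b₂ = q + 1 := by omega
  rcases hd with hs2 | hs2 <;> rw [hs2] at e2 <;> omega

lemma key_lower (m : ℕ) (hm : 2 ≤ m) :
    ∃ i, i ≤ m ∧ ∀ t a₁ b₁ a₂ b₂, t ≤ m → 1 ≤ b₂ →
      ((m*m+2)/2 - 1) + i = t + a₁*m + b₁*(m+1) →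
      ((m*m+2)/2 - 1) + m = t + a₂*m + b₂*(m+1) → False := by
  rcases Nat.even_or_odd m with ⟨q, rfl⟩ | ⟨q, rfl⟩
  · obtain ⟨p, rfl⟩ : ∃ p, q = p + 1 := ⟨q - 1, by omega⟩
    have hdiv : (((p+1)+(p+1))*((p+1)+(p+1))+2)/2 - 1 = 2*((p+1)*(p+1)) := by
      have : ((p+1)+(p+1))*((p+1)+(p+1)) = 2*(2*((p+1)*(p+1))) := by ring
      omega
    refine ⟨p, by omega, ?_⟩
    intro t a₁ b₁ a₂ b₂ ht hb2 h1 h2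
    rw [hdiv] at h1 h2
    exact lower_even p t a₁ b₁ a₂ b₂ ht h1 (by
      have : 2*((p+1)*(p+1)) + ((p+1)+(p+1)) = 2*((p+1)*(p+1)) + (2*p+2) := by ring
      omega) hb2
  · have hq1 : 1 ≤ q := by omega
    have hdiv : ((2*q+1)*(2*q+1)+2)/2 - 1 = 2*(q*q)+2*q := by
      have : (2*q+1)*(2*q+1) = 4*(q*q)+4*q+1 := by ring
      omega
    refine ⟨q, by omega, ?_⟩
    intro t a₁ b₁ a₂ b₂ ht hb2 h1 h2
    rw [hdiv] at h1 h2
    exact lower_odd q t a₁ b₁ a₂ b₂ hq1 ht (by omega) (by omega) hb2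

lemma rep_large (m N : ℕ) (hm : 1 ≤ m) (hN : m*m ≤ N) : ∃ a b, N = a*m + b*(m+1) := by
  have hd := Nat.div_add_mod N m
  have hr : N % m < m := Nat.mod_lt _ (by omega)
  have hq : m ≤ N / m := (Nat.le_div_iff_mul_le (by omega)).mpr hN
  obtain ⟨c, hc⟩ : ∃ c, N / m = N % m + c := ⟨N / m - N % m, by omega⟩
  refine ⟨c, N % m, ?_⟩
  rw [hc] at hd
  have hy : c*m + (N % m)*(m+1) = m*(N % m + c) + N % m := by ring
  omega

lemma prim_arith (m : ℕ) (hm : 2 ≤ m) (i j : ℕ) (hi : i ≤ m) (hj : j ≤ m) :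
    ∃ a b, 3*(m*m) + i = j + a*m + b*(m+1) ∧ 1 ≤ b := by
  have h2m : 2*m ≤ m*m := mul_le_mul_left hm m
  obtain ⟨N, hN⟩ : ∃ N, 3*(m*m) + i = j + (m+1) + N := ⟨3*(m*m)+i-j-(m+1), by omega⟩
  have hNge : m*m ≤ N := by omega
  obtain ⟨a, b, hab⟩ := rep_large m N (by omega) hNge
  refine ⟨a, b+1, ?_, by omega⟩
  have : (b+1)*(m+1) = b*(m+1) + (m+1) := by ring
  omega

-- the scrambling condition as a pairwise statement
lemma scram_set {n : ℕ} (A : Fin n → Fin n → Prop) (k : ℕ) :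
    (bmul (bpow A k) (bpow (btrans A) k) = bJ) ↔
      (∀ i j : Fin n, ∃ t, bpow A k i t ∧ bpow A k j t) := by
  constructor
  · intro hEq i j
    have h0 : bmul (bpow A k) (bpow (btrans A) k) i j = (bJ i j : Prop) := by rw [hEq]
    have h1 : bmul (bpow A k) (bpow (btrans A) k) i j := by
      rw [h0]; trivial
    obtain ⟨t, h2, h3⟩ := h1
    exact ⟨t, h2, (bpow_btrans A k t j).mp h3⟩
  · intro hall
    funext i j
    apply eq_true
    obtain ⟨t, h2, h3⟩ := hall i j
    exact ⟨t, h2, (bpow_btrans A k t j).mpr h3⟩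

lemma scramP_step {n : ℕ} (hn : 3 ≤ n) (k : ℕ)
    (hk : ∀ i j : Fin n, ∃ t, bpow (Wielandt n) k i t ∧ bpow (Wielandt n) k j t) :
    ∀ i j : Fin n, ∃ t, bpow (Wielandt n) (k+1) i t ∧ bpow (Wielandt n) (k+1) j t := by
  intro i j
  obtain ⟨t, h1, h2⟩ := hk i j
  obtain ⟨u, hu⟩ : ∃ u : Fin n, Wielandt n t u := by
    by_cases hc : t.val = n - 1
    · exact ⟨⟨0, by omega⟩, Or.inr (Or.inr ⟨hc, rfl⟩)⟩
    · have := t.isLt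
      exact ⟨⟨t.val+1, by omega⟩, Or.inl rfl⟩
  exact ⟨u, (bpow_succ_right _ _ _ _).mpr ⟨t, h1, hu⟩,
    (bpow_succ_right _ _ _ _).mpr ⟨t, h2, hu⟩⟩

lemma scramP_pair {n : ℕ} (hn : 3 ≤ n) (i j : Fin n) (hle : i.val ≤ j.val) :
    ∃ t, bpow (Wielandt n) (((n-1)*(n-1)+2)/2) i t ∧
      bpow (Wielandt n) (((n-1)*(n-1)+2)/2) j t := by
  have hn1 : n - 1 + 1 = n := by omega
  have hjlt := j.isLt
  obtain ⟨t, ht, ⟨a1, b1, he1, hc1⟩, ⟨a2, b2, he2, hc2⟩⟩ :=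
    key_upper (n-1) (by omega) i.val j.val hle (by omega)
  rw [hn1] at he1 he2
  obtain ⟨tf, htf⟩ : ∃ tf : Fin n, tf.val = t := ⟨⟨t, by omega⟩, rfl⟩
  refine ⟨tf, (wielandt_char hn _ i tf).mpr ⟨a1, b1, by omega, fun hv => Or.inl (hc1 hv)⟩,
    (wielandt_char hn _ j tf).mpr ⟨a2, b2, by omega, fun hv => Or.inl (hc2 hv)⟩⟩

lemma scramP_upper {n : ℕ} (hn : 3 ≤ n) :
    ∀ i j : Fin n, ∃ t, bpow (Wielandt n) (((n-1)*(n-1)+2)/2) i t ∧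
      bpow (Wielandt n) (((n-1)*(n-1)+2)/2) j t := by
  intro i j
  rcases le_total i.val j.val with hle | hle
  · exact scramP_pair hn i j hle
  · obtain ⟨t, h1, h2⟩ := scramP_pair hn j i hle
    exact ⟨t, h2, h1⟩

lemma scramP_lower {n : ℕ} (hn : 3 ≤ n) :
    ¬ (∀ i j : Fin n, ∃ t, bpow (Wielandt n) (((n-1)*(n-1)+2)/2 - 1) i t ∧
        bpow (Wielandt n) (((n-1)*(n-1)+2)/2 - 1) j t) := by
  intro hP
  have hn1 : n - 1 + 1 = n := by omega
  have hmm : 2*2 ≤ (n-1)*(n-1) := Nat.mul_le_mul (by omega) (by omega)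
  obtain ⟨i0, hi0, hcontra⟩ := key_lower (n-1) (by omega)
  obtain ⟨fi, hfi⟩ : ∃ fi : Fin n, fi.val = i0 := ⟨⟨i0, by omega⟩, rfl⟩
  obtain ⟨fm, hfm⟩ : ∃ fm : Fin n, fm.val = n - 1 := ⟨⟨n-1, by omega⟩, rfl⟩
  obtain ⟨t, hA, hB⟩ := hP fi fm
  obtain ⟨a1, b1, he1, hc1⟩ := (wielandt_char hn _ fi t).mp hA
  obtain ⟨a2, b2, he2, hc2⟩ := (wielandt_char hn _ fm t).mp hB
  have hb2 : 1 ≤ b2 := by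
    have := hc2 hfm
    omega
  have htlt := t.isLt
  refine hcontra t.val a1 b1 a2 b2 (by omega) hb2 ?_ ?_
  · rw [hn1]; omega
  · rw [hn1]; omega

theorem wielandt_primitive_and_scram {n : ℕ} (hn : 3 ≤ n) :
    IsPrimitive (Wielandt n) ∧ scram (Wielandt n) = ((n - 1) ^ 2 + 2) / 2 := by
  have hn1 : n - 1 + 1 = n := by omega
  have hmm : 2*2 ≤ (n-1)*(n-1) := Nat.mul_le_mul (by omega) (by omega)
  constructor
  · -- primitivity
    refine ⟨3*((n-1)*(n-1)), by omega, ?_⟩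
    funext i j
    apply eq_true
    have hi := i.isLt
    have hj := j.isLt
    obtain ⟨a, b, he, hb⟩ := prim_arith (n-1) (by omega) i.val j.val (by omega) (by omega)
    rw [hn1] at he
    exact (wielandt_char hn _ i j).mpr ⟨a, b, he, fun _ => Or.inl hb⟩
  · -- scrambling index
    have hsq : (n-1)^2 + 2 = (n-1)*(n-1) + 2 := by ring
    rw [hsq]
    have hmem : (((n-1)*(n-1)+2)/2) ∈
        {k | 1 ≤ k ∧ bmul (bpow (Wielandt n) k) (bpow (btrans (Wielandt n)) k) = bJ} := by
      refine ⟨by omega, ?_⟩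
      exact (scram_set _ _).mpr (scramP_upper hn)
    apply le_antisymm
    · exact Nat.sInf_le hmem
    · apply le_csInf ⟨_, hmem⟩
      rintro k ⟨hk1, hk2⟩
      by_contra hlt
      push_neg at hlt
      have hPk := (scram_set _ _).mp hk2
      have hclimb : ∀ d, ∀ i j : Fin n, ∃ t, bpow (Wielandt n) (k+d) i t ∧
          bpow (Wielandt n) (k+d) j t := by
        intro d
        induction d with
        | zero => exact hPk
        | succ d ih => exact scramP_step hn (k+d) ih
      have hfin := hclimb (((n-1)*(n-1)+2)/2 - 1 - k)
      rw [show k + (((n-1)*(n-1)+2)/2 - 1 - k) = ((n-1)*(n-1)+2)/2 - 1 from by omega] at hfin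
      exact scramP_lower hn hfin
end

section
/- Let M be an n×n primitive Boolean matrix with Boolean rank 2. Then k(M) = 2 if and only if M has a Boolean rank factorization M = AB (A is n×2, B is 2×n) such that (i) BA = W_2 = [[1,1],[1,0]] or BA = J_2, (ii) some row of A is (1,0) and some row of A is (0,1), and (iii) no column of B is (1,1)^t. -/
lemma fin2_or (s : Fin 2) : s = 0 ∨ s = 1 := by omega

lemma bpow_one_iff {n : ℕ} (M : Fin n → Fin n → Prop) (i j : Fin n) :
    bpow M 1 i j ↔ M i j := by
  simp [bpow, bmul]

lemma factor_pow {n : ℕ} (A : Fin n → Fin 2 → Prop) (B : Fin 2 → Fin n → Prop) :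
    ∀ (r : ℕ) (i : Fin n) (j : Fin n), bpow (bmul A B) (r+1) i j ↔
      ∃ s t, A i s ∧ bpow (bmul B A) r s t ∧ B t j := by
  intro r
  induction r with
  | zero =>
    intro i j
    simp [bpow, bmul]
  | succ r ih =>
    intro i j
    constructor
    · rintro ⟨k, ⟨s, hAis, hBsk⟩, hrest⟩
      rw [ih k j] at hrest
      obtain ⟨s', t, hAks', hC, hB⟩ := hrest
      exact ⟨s, t, hAis, ⟨s', ⟨k, hBsk, hAks'⟩, hC⟩, hB⟩
    · rintro ⟨s, t, hAis, ⟨u, ⟨k, hBsk, hAku⟩, hC⟩, hB⟩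
      exact ⟨k, ⟨s, hAis, hBsk⟩, (ih k j).2 ⟨u, t, hAku, hC, hB⟩⟩

lemma no_path {C : Fin 2 → Fin 2 → Prop} {a b : Fin 2} (hab : a ≠ b) (h : ¬ C a b) :
    ∀ m, ¬ bpow C m a b := by
  intro m
  induction m with
  | zero => simpa [bpow] using hab
  | succ m ih =>
    rintro ⟨k, hCak, hk⟩
    have hk2 : k = a ∨ k = b := by omega
    rcases hk2 with rfl | rfl
    · exact ih hk
    · exact h hCak

lemma antidiag {C : Fin 2 → Fin 2 → Prop} (h0 : ¬ C 0 0) (h1 : ¬ C 1 1) :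
    ∀ (m : ℕ) (i j : Fin 2), bpow C m i j → (i = j ↔ Even m) := by
  intro m
  induction m with
  | zero => intro i j hij; simpa [bpow] using hij
  | succ m ih =>
    rintro i j ⟨k, hCik, hk⟩
    have hik : i ≠ k := by
      rintro rfl
      rcases fin2_or i with rfl | rfl
      · exact h0 hCik
      · exact h1 hCik
    have hkj := ih k j hk
    rw [Nat.even_add_one]
    by_cases hm : Even m
    · have : k = j := hkj.2 hm
      subst this
      simp [hm]
      exact hik
    · have hkj' : k ≠ j := fun h => hm (hkj.1 h)
      have : i = j := by omega
      simp [hm, this]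

lemma classify {C : Fin 2 → Fin 2 → Prop} {m : ℕ} (hm : 1 ≤ m) (h : bpow C m = bJ) :
    C 0 1 ∧ C 1 0 ∧ (C 0 0 ∨ C 1 1) := by
  have h01 : bpow C m 0 1 := by rw [h]; trivial
  have h10 : bpow C m 1 0 := by rw [h]; trivial
  have h00 : bpow C m 0 0 := by rw [h]; trivial
  refine ⟨?_, ?_, ?_⟩
  · by_contra hc; exact no_path (by decide) hc m h01
  · by_contra hc; exact no_path (by decide) hc m h10
  · by_contra hc
    push_neg at hc
    have e1 := antidiag hc.1 hc.2 m 0 0 h00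
    have e2 := antidiag hc.1 hc.2 m 0 1 h01
    simp at e1 e2
    exact (Nat.not_even_iff_odd.2 e2) e1
lemma row_unit {n : ℕ} {A : Fin n → Fin 2 → Prop} {i : Fin n} {s t : Fin 2}
    (hst : t ≠ s) (h1 : A i s) (h2 : ¬ A i t) : ∀ j, A i j ↔ j = s := by
  intro j
  constructor
  · intro hj
    by_contra hne
    have : j = t := by omega
    exact h2 (this ▸ hj)
  · rintro rfl; exact h1
lemma wielandt00 : Wielandt 2 0 0 := Or.inr (Or.inl ⟨rfl, rfl⟩)
lemma wielandt01 : Wielandt 2 0 1 := Or.inl rfl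
lemma wielandt10 : Wielandt 2 1 0 := Or.inr (Or.inr ⟨rfl, rfl⟩)
lemma wielandt11 : ¬ Wielandt 2 1 1 := by simp [Wielandt]
theorem brank_two_scram_eq_two_iff {n : ℕ} (M : Fin n → Fin n → Prop)
    (hM : IsPrimitive M) (hrank : brank M = 2) :
    scram M = 2 ↔
      ∃ (A : Fin n → Fin 2 → Prop) (B : Fin 2 → Fin n → Prop),
        M = bmul A B ∧
        (bmul B A = Wielandt 2 ∨ bmul B A = bJ) ∧
        (∃ i, ∀ j, A i j ↔ j = 0) ∧
        (∃ i, ∀ j, A i j ↔ j = 1) ∧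
        ¬ ∃ j, ∀ i : Fin 2, B i j := by
  classical
  constructor
  · intro hs
    unfold scram at hs
    unfold brank at hrank
    -- scram set facts
    have hSne : {k | 1 ≤ k ∧ bmul (bpow M k) (bpow (btrans M) k) = bJ}.Nonempty := by
      by_contra hne
      rw [Set.not_nonempty_iff_eq_empty] at hne
      rw [hne, Nat.sInf_empty] at hs
      omega
    have h1not : ¬ (bmul (bpow M 1) (bpow (btrans M) 1) = bJ) := by
      intro hmem
      have := Nat.sInf_le (s := {k | 1 ≤ k ∧ bmul (bpow M k) (bpow (btrans M) k) = bJ})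
        ⟨le_refl 1, hmem⟩
      omega
    -- brank set facts
    have hBne : {b | 0 < b ∧ ∃ (A : Fin n → Fin b → Prop) (B : Fin b → Fin n → Prop),
        M = bmul A B}.Nonempty := by
      by_contra hne
      rw [Set.not_nonempty_iff_eq_empty] at hne
      rw [hne, Nat.sInf_empty] at hrank
      omega
    have hB2 := Nat.sInf_mem hBne
    rw [hrank] at hB2
    obtain ⟨-, A, B, hfact⟩ := hB2
    have hB1 : ¬ ((0:ℕ) < 1 ∧ ∃ (A' : Fin n → Fin 1 → Prop) (B' : Fin 1 → Fin n → Prop),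
        M = bmul A' B') := by
      intro hmem
      have := Nat.sInf_le (s := {b | 0 < b ∧ ∃ (A : Fin n → Fin b → Prop)
        (B : Fin b → Fin n → Prop), M = bmul A B}) hmem
      omega
    -- disjoint rows exist
    have hdisj : ∃ i j, ∀ k, ¬ (M i k ∧ M j k) := by
      by_contra hc
      push_neg at hc
      apply h1not
      funext i j
      obtain ⟨k, h1, h2⟩ := hc i j
      exact eq_true ⟨k, (bpow_one_iff M i k).2 h1, (bpow_one_iff (btrans M) k j).2 h2⟩
    obtain ⟨i0, j0, hd⟩ := hdisj
    obtain ⟨r, hr1, hrJ⟩ := hM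
    -- rows of A are nonzero
    have hArow : ∀ i, ∃ s, A i s := by
      intro i
      by_contra hc
      push_neg at hc
      obtain ⟨r', rfl⟩ : ∃ r', r = r' + 1 := ⟨r - 1, by omega⟩
      have hJ : bpow M (r'+1) i i := by rw [hrJ]; trivial
      obtain ⟨k, hMik, -⟩ := hJ
      rw [hfact] at hMik
      obtain ⟨s, hsA, -⟩ := hMik
      exact hc s hsA
    -- rows of B are nonzero
    have hBrow : ∀ s, ∃ k, B s k := by
      intro s
      by_contra hc
      push_neg at hc
      apply hB1
      refine ⟨Nat.one_pos, fun i _ => A i (if s = 0 then 1 else 0),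
        fun _ j => B (if s = 0 then 1 else 0) j, ?_⟩
      funext i j
      rw [hfact]
      apply propext
      constructor
      · rintro ⟨u, hAu, hBu⟩
        have hus : u ≠ s := by rintro rfl; exact hc j hBu
        have hut : u = if s = 0 then 1 else 0 := by
          rcases fin2_or s with rfl | rfl <;> simp_all <;> omega
        exact ⟨0, hut ▸ hAu, hut ▸ hBu⟩
      · rintro ⟨-, hAt, hBt⟩
        exact ⟨_, hAt, hBt⟩
    -- supports of rows i0, j0 of A are disjoint
    have hsup : ∀ s, ¬ (A i0 s ∧ A j0 s) := by
      rintro s ⟨h1, h2⟩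
      obtain ⟨k, hk⟩ := hBrow s
      exact hd k ⟨hfact ▸ ⟨s, h1, hk⟩, hfact ▸ ⟨s, h2, hk⟩⟩
    -- normalized witnesses
    have key : ∃ p q : Fin n, (∀ j, A p j ↔ j = 0) ∧ (∀ j, A q j ↔ j = 1) ∧
        ∀ k, ¬ (M p k ∧ M q k) := by
      obtain ⟨s0, hs0⟩ := hArow i0
      obtain ⟨s1, hs1⟩ := hArow j0
      have hne : s0 ≠ s1 := by rintro rfl; exact hsup s0 ⟨hs0, hs1⟩
      rcases fin2_or s0 with rfl | rfl
      · have hs1' : s1 = 1 := by omega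
        subst hs1'
        refine ⟨i0, j0, row_unit (by decide) hs0 (fun h => hsup 1 ⟨h, hs1⟩),
          row_unit (by decide) hs1 (fun h => hsup 0 ⟨hs0, h⟩), hd⟩
      · have hs1' : s1 = 0 := by omega
        subst hs1'
        refine ⟨j0, i0, row_unit (by decide) hs1 (fun h => hsup 1 ⟨hs0, h⟩),
          row_unit (by decide) hs0 (fun h => hsup 0 ⟨h, hs1⟩),
          fun k hk => hd k ⟨hk.2, hk.1⟩⟩
    obtain ⟨p, q, hp, hq, hd'⟩ := key
    -- no column of B is (1,1)
    have hiii : ∀ k, ¬ (B 0 k ∧ B 1 k) := by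
      rintro k ⟨h0, h1⟩
      exact hd' k ⟨hfact ▸ ⟨0, (hp 0).2 rfl, h0⟩, hfact ▸ ⟨1, (hq 1).2 rfl, h1⟩⟩
    -- r ≥ 2
    have hr2 : 2 ≤ r := by
      by_contra h
      have hr : r = 1 := by omega
      subst hr
      have h1 : bpow M 1 p p := by rw [hrJ]; trivial
      have h2 : bpow M 1 q p := by rw [hrJ]; trivial
      rw [bpow_one_iff] at h1 h2
      exact hd' p ⟨h1, h2⟩
    obtain ⟨r', rfl⟩ : ∃ r', r = r' + 1 := ⟨r - 1, by omega⟩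
    -- (BA)^{r'} = J
    have hCJ : bpow (bmul B A) r' = bJ := by
      funext s t
      refine eq_true ?_
      obtain ⟨k1, hk1⟩ := hBrow t
      have hrowi : ∀ j, A (if s = 0 then p else q) j ↔ j = s := by
        rcases fin2_or s with rfl | rfl <;> first | simpa using hp | simpa using hq
      have hJ : bpow M (r'+1) (if s = 0 then p else q) k1 := by rw [hrJ]; trivial
      rw [hfact, factor_pow] at hJ
      obtain ⟨s', t', hA, hC, hB⟩ := hJ
      have hs' : s' = s := (hrowi s').1 hA
      have ht' : t' = t := by
        by_contra hne
        rcases fin2_or t' with rfl | rfl <;> rcases fin2_or t with rfl | rfl <;>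
          first
            | exact hne rfl
            | exact hiii k1 ⟨hB, hk1⟩
            | exact hiii k1 ⟨hk1, hB⟩
      subst hs'; subst ht'
      exact hC
    have hr'1 : 1 ≤ r' := by omega
    obtain ⟨hC01, hC10, hdiag⟩ := classify hr'1 hCJ
    by_cases hC00 : bmul B A 0 0
    · -- no swap needed
      refine ⟨A, B, hfact, ?_, ⟨p, hp⟩, ⟨q, hq⟩, ?_⟩
      · by_cases hC11 : bmul B A 1 1
        · right
          funext s t
          refine eq_true ?_
          rcases fin2_or s with rfl | rfl <;> rcases fin2_or t with rfl | rfl <;> assumption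
        · left
          funext s t
          apply propext
          rcases fin2_or s with rfl | rfl <;> rcases fin2_or t with rfl | rfl
          · exact iff_of_true hC00 wielandt00
          · exact iff_of_true hC01 wielandt01
          · exact iff_of_true hC10 wielandt10
          · exact iff_of_false hC11 wielandt11
      · rintro ⟨j, hj⟩
        exact hiii j ⟨hj 0, hj 1⟩
    · -- swap the two inner indices
      have hC11 : bmul B A 1 1 := hdiag.resolve_left hC00
      refine ⟨fun i j => A i (if j = 0 then 1 else 0),
              fun s k => B (if s = 0 then 1 else 0) k, ?_, Or.inl ?_, ⟨q, ?_⟩, ⟨p, ?_⟩, ?_⟩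
      · funext i j
        rw [hfact]
        apply propext
        constructor
        · rintro ⟨u, h1, h2⟩
          refine ⟨if u = 0 then 1 else 0, ?_, ?_⟩ <;>
            rcases fin2_or u with rfl | rfl <;> simpa
        · rintro ⟨u, h1, h2⟩
          exact ⟨if u = 0 then 1 else 0, h1, h2⟩
      · funext s t
        apply propext
        rcases fin2_or s with rfl | rfl <;> rcases fin2_or t with rfl | rfl
        · exact iff_of_true hC11 wielandt00
        · exact iff_of_true hC10 wielandt01
        · exact iff_of_true hC01 wielandt10
        · exact iff_of_false hC00 wielandt11
      · intro j
        rcases fin2_or j with rfl | rfl <;> simp [hq]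
      · intro j
        rcases fin2_or j with rfl | rfl <;> simp [hp]
      · rintro ⟨j, hj⟩
        exact hiii j ⟨hj 1, hj 0⟩
  · rintro ⟨A, B, hfact, hBA, ⟨p, hp⟩, ⟨q, hq⟩, hcol⟩
    subst hfact
    obtain ⟨r, hr1, hrJ⟩ := hM
    have hArow : ∀ i, ∃ s, A i s := by
      intro i
      by_contra hc
      push_neg at hc
      obtain ⟨r', rfl⟩ : ∃ r', r = r' + 1 := ⟨r - 1, by omega⟩
      have hJ : bpow (bmul A B) (r'+1) i i := by rw [hrJ]; trivial
      obtain ⟨k, ⟨s, hsA, -⟩, -⟩ := hJ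
      exact hc s hsA
    have hiii : ∀ k, ¬ (B 0 k ∧ B 1 k) := by
      rintro k ⟨h0, h1⟩
      exact hcol ⟨k, fun i => by rcases fin2_or i with rfl | rfl; exacts [h0, h1]⟩
    have hC0 : ∀ s : Fin 2, ∃ k, B s k ∧ A k 0 := by
      intro s
      have hh : bmul B A s 0 := by
        rcases hBA with h | h <;> rw [h]
        · rcases fin2_or s with rfl | rfl
          exacts [wielandt00, wielandt10]
        · trivial
      exact hh
    have h2J : bmul (bpow (bmul A B) 2) (bpow (btrans (bmul A B)) 2) = bJ := by
      funext i j
      refine eq_true ?_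
      obtain ⟨s, hs⟩ := hArow i
      obtain ⟨s', hs'⟩ := hArow j
      obtain ⟨u, hBu, hAu⟩ := hC0 s
      obtain ⟨u', hBu', hAu'⟩ := hC0 s'
      obtain ⟨kk, hB0, -⟩ := hC0 0
      exact ⟨kk, ⟨u, ⟨s, hs, hBu⟩, ⟨kk, ⟨0, hAu, hB0⟩, rfl⟩⟩,
              ⟨u', ⟨0, hAu', hB0⟩, ⟨j, ⟨s', hs', hBu'⟩, rfl⟩⟩⟩
    have h1J : bmul (bpow (bmul A B) 1) (bpow (btrans (bmul A B)) 1) ≠ bJ := by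
      intro h
      have hh : bmul (bpow (bmul A B) 1) (bpow (btrans (bmul A B)) 1) p q := by
        rw [h]; trivial
      obtain ⟨k, h1, h2⟩ := hh
      rw [bpow_one_iff] at h1 h2
      obtain ⟨s, hA1, hB1⟩ := h1
      obtain ⟨s', hA2, hB2⟩ := h2
      rw [hp s] at hA1
      rw [hq s'] at hA2
      subst hA1; subst hA2
      exact hiii k ⟨hB1, hB2⟩
    unfold scram
    apply le_antisymm
    · exact Nat.sInf_le ⟨by norm_num, h2J⟩
    · refine le_csInf ⟨2, by norm_num, h2J⟩ ?_
      rintro k ⟨hk1, hkJ⟩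
      by_contra hlt
      push_neg at hlt
      have hk : k = 1 := by omega
      subst hk
      exact h1J hkJ
end

section
/- Let A be an n×b and B a b×n Boolean matrix with BA = W_b where b ≥ 2. Then every column of B is dominated by (entrywise ≤) some column of W_b, and every row of A is dominated by some row of W_b; in particular each column of B lies in {e_1, …, e_b, e_{b−1}+e_b} and each row of A lies in {e_1^t, …, e_b^t, (e_1+e_b)^t}, provided A has no zero row and B has no zero column. -/
theorem columns_rows_dominated {n b : ℕ} (hb : 2 ≤ b)
    (A : Fin n → Fin b → Prop) (B : Fin b → Fin n → Prop)
    (hA : NoZeroRow A) (hB : NoZeroCol B)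
    (hBA : bmul B A = Wielandt b) :
    (∀ j, ∃ c, ∀ i, B i j → Wielandt b i c) ∧
    (∀ i, ∃ r, ∀ j, A i j → Wielandt b r j) ∧
    (∀ j, (∃ k, ∀ i, B i j ↔ i = k) ∨
      (∀ i : Fin b, B i j ↔ (i.val = b - 2 ∨ i.val = b - 1))) ∧
    (∀ i, (∃ k, ∀ j, A i j ↔ j = k) ∨
      (∀ j : Fin b, A i j ↔ (j.val = 0 ∨ j.val = b - 1))) := by
  have hW : ∀ i j, (∃ k, B i k ∧ A k j) ↔ Wielandt b i j := by
    intro i j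
    exact iff_of_eq (congrFun (congrFun hBA i) j)
  have hcol : ∀ j, ∃ c, ∀ i, B i j → Wielandt b i c := by
    intro j
    obtain ⟨c, hc⟩ := hA j
    exact ⟨c, fun i hij => (hW i c).mp ⟨j, hij, hc⟩⟩
  have hrow : ∀ i, ∃ r, ∀ j, A i j → Wielandt b r j := by
    intro i
    obtain ⟨r, hr⟩ := hB i
    exact ⟨r, fun j hij => (hW r j).mp ⟨i, hr, hij⟩⟩
  refine ⟨hcol, hrow, ?_, ?_⟩
  · intro j
    obtain ⟨c, hc⟩ := hcol j
    obtain ⟨i0, hi0⟩ := hB j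
    by_cases hc0 : c.val = 0
    · have hdom : ∀ i, B i j → i.val = b - 2 ∨ i.val = b - 1 := by
        intro i hij
        have h := hc i hij
        simp only [Wielandt] at h
        omega
      by_cases h2 : B ⟨b - 2, by omega⟩ j
      · by_cases h1 : B ⟨b - 1, by omega⟩ j
        · right
          intro i
          constructor
          · exact hdom i
          · rintro (h | h)
            · have hi : i = ⟨b - 2, by omega⟩ := Fin.ext h
              rw [hi]; exact h2
            · have hi : i = ⟨b - 1, by omega⟩ := Fin.ext h
              rw [hi]; exact h1
        · left
          refine ⟨⟨b - 2, by omega⟩, fun i => ⟨fun hij => ?_, fun h => h ▸ h2⟩⟩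
          rcases hdom i hij with h | h
          · exact Fin.ext h
          · exact absurd ((Fin.ext h : i = ⟨b - 1, by omega⟩) ▸ hij) h1
      · left
        have hb1 : B ⟨b - 1, by omega⟩ j := by
          rcases hdom i0 hi0 with h | h
          · exact absurd ((Fin.ext h : i0 = ⟨b - 2, by omega⟩) ▸ hi0) h2
          · exact (Fin.ext h : i0 = ⟨b - 1, by omega⟩) ▸ hi0
        refine ⟨⟨b - 1, by omega⟩, fun i => ⟨fun hij => ?_, fun h => h ▸ hb1⟩⟩
        rcases hdom i hij with h | h
        · exact absurd ((Fin.ext h : i = ⟨b - 2, by omega⟩) ▸ hij) h2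
        · exact Fin.ext h
    · left
      have hdom : ∀ i, B i j → i.val + 1 = c.val := by
        intro i hij
        have h := hc i hij
        simp only [Wielandt] at h
        omega
      refine ⟨i0, fun i => ⟨fun hij => ?_, fun h => h ▸ hi0⟩⟩
      have h1 := hdom i hij
      have h2 := hdom i0 hi0
      exact Fin.ext (by omega)
  · intro i
    obtain ⟨r, hr⟩ := hrow i
    obtain ⟨j0, hj0⟩ := hA i
    by_cases hr2 : r.val = b - 2
    · have hdom : ∀ j, A i j → j.val = 0 ∨ j.val = b - 1 := by
        intro j hij
        have h := hr j hij
        simp only [Wielandt] at h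
        omega
      by_cases h0 : A i ⟨0, by omega⟩
      · by_cases h1 : A i ⟨b - 1, by omega⟩
        · right
          intro j
          constructor
          · exact hdom j
          · rintro (h | h)
            · have hj : j = ⟨0, by omega⟩ := Fin.ext h
              rw [hj]; exact h0
            · have hj : j = ⟨b - 1, by omega⟩ := Fin.ext h
              rw [hj]; exact h1
        · left
          refine ⟨⟨0, by omega⟩, fun j => ⟨fun hij => ?_, fun h => h ▸ h0⟩⟩
          rcases hdom j hij with h | h
          · exact Fin.ext h
          · exact absurd ((Fin.ext h : j = ⟨b - 1, by omega⟩) ▸ hij) h1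
      · left
        have hb1 : A i ⟨b - 1, by omega⟩ := by
          rcases hdom j0 hj0 with h | h
          · exact absurd ((Fin.ext h : j0 = ⟨0, by omega⟩) ▸ hj0) h0
          · exact (Fin.ext h : j0 = ⟨b - 1, by omega⟩) ▸ hj0
        refine ⟨⟨b - 1, by omega⟩, fun j => ⟨fun hij => ?_, fun h => h ▸ hb1⟩⟩
        rcases hdom j hij with h | h
        · exact absurd ((Fin.ext h : j = ⟨0, by omega⟩) ▸ hij) h0
        · exact Fin.ext h
    · left
      have hdom : ∀ j j' : Fin b, A i j → A i j' → j = j' := by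
        intro j j' hij hij'
        have h := hr j hij
        have h' := hr j' hij'
        simp only [Wielandt] at h h'
        have hjlt := j.isLt
        have hjlt' := j'.isLt
        exact Fin.ext (by omega)
      exact ⟨j0, fun j => ⟨fun hij => hdom j j0 hij hj0, fun h => h ▸ hj0⟩⟩
end

section
/- Let M = AB where A is n×b, B is b×n, both Boolean with no zero lines, and BA = W_b (b ≥ 3), h = ⌈((b−1)²+1)/2⌉. If some column of B equals u = e_{b−1} + e_b, then M^h (M^t)^h = J_n; consequently k(M) ≤ h. -/
section Walks
variable {ν : ℕ} {N : Fin ν → Fin ν → Prop}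

lemma bpow_one {i j : Fin ν} (h : N i j) : bpow N 1 i j := ⟨j, h, rfl⟩

lemma bpow_comp : ∀ {x y : ℕ} {i k j : Fin ν},
    bpow N x i k → bpow N y k j → bpow N (x + y) i j := by
  intro x
  induction x with
  | zero =>
    intro y i k j h1 h2
    rw [Nat.zero_add]
    have : i = k := h1
    subst this; exact h2
  | succ x ih =>
    intro y i k j h1 h2
    obtain ⟨l, hl, hrest⟩ := h1
    rw [Nat.succ_add]
    exact ⟨l, hl, ih hrest h2⟩

lemma bpow_congr {x y : ℕ} (h : x = y) {i j : Fin ν} (hp : bpow N x i j) : bpow N y i j :=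
  h ▸ hp

lemma bpow_snoc {x : ℕ} {i k j : Fin ν} (h1 : bpow N x i k) (h2 : N k j) :
    bpow N (x + 1) i j := bpow_comp h1 (bpow_one h2)

lemma bpow_rev : ∀ {x : ℕ} {i j : Fin ν}, bpow N x i j → bpow (btrans N) x j i := by
  intro x
  induction x with
  | zero => intro i j h; exact (show i = j from h).symm
  | succ x ih =>
    intro i j h
    obtain ⟨l, hl, hr⟩ := h
    exact bpow_snoc (ih hr) hl

end Walks

section WielandtWalks
variable {b : ℕ}

lemma w_fwd (hb : 3 ≤ b) : ∀ (d : ℕ) (p s : Fin b), p.val + d = s.val →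
    bpow (Wielandt b) d p s := by
  intro d
  induction d with
  | zero => intro p s h; exact Fin.ext (by omega)
  | succ d ih =>
    intro p s h
    have hs := s.isLt
    refine ⟨⟨p.val + 1, by omega⟩, Or.inl rfl, ih _ _ (by simp; omega)⟩

lemma w_to0_long (hb : 3 ≤ b) (p : Fin b) :
    bpow (Wielandt b) (b - p.val) p ⟨0, by omega⟩ := by
  have hp := p.isLt
  have h1 : bpow (Wielandt b) (b - 1 - p.val) p ⟨b - 1, by omega⟩ :=
    w_fwd hb _ _ _ (by simp; omega)
  have h2 : Wielandt b ⟨b - 1, by omega⟩ ⟨0, by omega⟩ := Or.inr (Or.inr ⟨rfl, rfl⟩)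
  exact bpow_congr (by omega) (bpow_snoc h1 h2)

lemma w_to0_short (hb : 3 ≤ b) (p : Fin b) (hp2 : p.val ≤ b - 2) :
    bpow (Wielandt b) (b - 1 - p.val) p ⟨0, by omega⟩ := by
  have hp := p.isLt
  have h1 : bpow (Wielandt b) (b - 2 - p.val) p ⟨b - 2, by omega⟩ :=
    w_fwd hb _ _ _ (by simp; omega)
  have h2 : Wielandt b ⟨b - 2, by omega⟩ ⟨0, by omega⟩ := Or.inr (Or.inl ⟨rfl, rfl⟩)
  exact bpow_congr (by omega) (bpow_snoc h1 h2)

lemma w_loops (hb : 3 ≤ b) (a c : ℕ) :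
    bpow (Wielandt b) (a * (b - 1) + c * b) ⟨0, by omega⟩ ⟨0, by omega⟩ := by
  induction a with
  | zero =>
    induction c with
    | zero =>
      have h0 : bpow (Wielandt b) 0 (⟨0, by omega⟩ : Fin b) ⟨0, by omega⟩ := rfl
      exact bpow_congr (by ring) h0
    | succ c ihc =>
      have hloop : bpow (Wielandt b) b (⟨0, by omega⟩ : Fin b) ⟨0, by omega⟩ :=
        bpow_congr (by simp) (w_to0_long hb ⟨0, by omega⟩)
      exact bpow_congr (by ring) (bpow_comp ihc hloop)
  | succ a iha =>
    have hloop : bpow (Wielandt b) (b - 1) (⟨0, by omega⟩ : Fin b) ⟨0, by omega⟩ :=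
      bpow_congr (by simp) (w_to0_short hb ⟨0, by omega⟩ (by simp))
    exact bpow_congr (by ring) (bpow_comp iha hloop)

lemma walk_exists (hb : 3 ≤ b) {L : ℕ} (p s : Fin b) (a c : ℕ)
    (hL : L + p.val = s.val + a * (b - 1) + c * b)
    (hv : 1 ≤ c ∨ (1 ≤ a ∧ p.val ≤ b - 2) ∨ (a = 0 ∧ c = 0 ∧ p.val ≤ s.val)) :
    bpow (Wielandt b) L p s := by
  have hpb := p.isLt
  have hsb := s.isLt
  rcases hv with hc | ⟨ha, hp2⟩ | ⟨ha0, hc0, hps⟩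
  · obtain ⟨c', rfl⟩ : ∃ c', c = c' + 1 := ⟨c - 1, by omega⟩
    have hcb : (c' + 1) * b = c' * b + b := by ring
    rw [hcb] at hL
    have e : (b - p.val) + (a * (b - 1) + c' * b) + s.val = L := by
      generalize a * (b - 1) = X at hL ⊢
      generalize c' * b = Y at hL ⊢
      omega
    exact bpow_congr e (bpow_comp (bpow_comp (w_to0_long hb p) (w_loops hb a c'))
      (w_fwd hb s.val ⟨0, by omega⟩ s (by simp)))
  · obtain ⟨a', rfl⟩ : ∃ a', a = a' + 1 := ⟨a - 1, by omega⟩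
    have hab : (a' + 1) * (b - 1) = a' * (b - 1) + (b - 1) := by ring
    rw [hab] at hL
    have e : (b - 1 - p.val) + (a' * (b - 1) + c * b) + s.val = L := by
      generalize a' * (b - 1) = X at hL ⊢
      generalize c * b = Y at hL ⊢
      omega
    exact bpow_congr e (bpow_comp (bpow_comp (w_to0_short hb p hp2) (w_loops hb a' c))
      (w_fwd hb s.val ⟨0, by omega⟩ s (by simp)))
  · subst ha0; subst hc0
    exact w_fwd hb L p s (by omega)

end WielandtWalks


lemma master_aux {b : ℕ} (hb : 3 ≤ b) {m : ℕ} (hm : m = (b - 1) ^ 2 / 2)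
    (p q : ℕ) (hp : p < b) (hq : q < b) (hpq : p ≤ q) :
    ∃ s t a₁ c₁ a₂ c₂, s < b ∧ t < b ∧
      m + p = s + a₁ * (b - 1) + c₁ * b ∧
      (1 ≤ c₁ ∨ (1 ≤ a₁ ∧ p ≤ b - 2) ∨ (a₁ = 0 ∧ c₁ = 0 ∧ p ≤ s)) ∧
      m + q = t + a₂ * (b - 1) + c₂ * b ∧
      (1 ≤ c₂ ∨ (1 ≤ a₂ ∧ q ≤ b - 2) ∨ (a₂ = 0 ∧ c₂ = 0 ∧ q ≤ t)) ∧
      (s = t ∨ ((s = b - 2 ∨ s = b - 1) ∧ (t = b - 2 ∨ t = b - 1))) := by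
  rcases Nat.even_or_odd b with ⟨k, hk⟩ | ⟨k, hk⟩
  · -- even case : b = j + 2 + (j + 2)
    obtain ⟨j, rfl⟩ : ∃ j, k = j + 2 := ⟨k - 2, by omega⟩
    subst hk
    have hm' : m = 2 * j ^ 2 + 6 * j + 4 := by
      have e1 : (j + 2 + (j + 2)) - 1 = 2 * j + 3 := by omega
      rw [hm, e1]
      have e2 : (2 * j + 3) ^ 2 = (2 * j ^ 2 + 6 * j + 4) * 2 + 1 := by ring
      rw [e2]
      omega
    subst hm'
    have hb1 : (j + 2 + (j + 2)) - 1 = 2 * j + 3 := by omega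
    by_cases h1 : q ≤ p + j + 1
    · by_cases h2 : p = q
      · subst h2
        exact ⟨p, p, 0, j + 1, 0, j + 1, by omega, by omega, by rw [hb1]; ring, by omega,
          by rw [hb1]; ring, by omega, by omega⟩
      · obtain ⟨d, rfl⟩ : ∃ d, q = p + (d + 1) := ⟨q - p - 1, by omega⟩
        obtain ⟨e, rfl⟩ : ∃ e, j = d + e := ⟨j - d, by omega⟩
        exact ⟨p + (d + 1), p + (d + 1), d + 1, e, 0, (d + e) + 1, by omega, by omega,
          by rw [hb1]; ring, by omega, by rw [hb1]; ring, by omega, by omega⟩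
    · by_cases h3 : q = p + j + 2
      · subst h3
        by_cases h4 : p = j + 1
        · subst h4
          refine ⟨2 * j + 2, 2 * j + 3, j + 1, 0, 0, j + 1, by omega, by omega,
            by rw [hb1]; ring, by omega, by rw [hb1]; ring, by omega, by omega⟩
        · exact ⟨p, p, 0, j + 1, j + 2, 0, by omega, by omega, by rw [hb1]; ring, by omega,
            by rw [hb1]; ring, by omega, by omega⟩
      · obtain ⟨f, rfl⟩ : ∃ f, q = p + j + 3 + f := ⟨q - p - j - 3, by omega⟩
        obtain ⟨e, rfl⟩ : ∃ e, j = f + e := ⟨j - f, by omega⟩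
        exact ⟨p, p, 0, (f + e) + 1, e + 1, f + 1, by omega, by omega, by rw [hb1]; ring, by omega,
          by rw [hb1]; ring, by omega, by omega⟩
  · -- odd case : b = 2k+1, k ≥ 1
    subst hk
    have hk1 : 1 ≤ k := by omega
    have hm' : m = 2 * k ^ 2 := by
      have e1 : (2 * k + 1) - 1 = 2 * k := by omega
      rw [hm, e1]
      have e2 : (2 * k) ^ 2 = (2 * k ^ 2) * 2 := by ring
      rw [e2]
      omega
    subst hm'
    have hb1 : (2 * k + 1) - 1 = 2 * k := by omega
    by_cases h1 : q ≤ p + k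
    · by_cases h2 : p = 2 * k
      · obtain ⟨e, rfl⟩ : ∃ e, k = e + 1 := ⟨k - 1, by omega⟩
        have h2' : q = 2 * (e + 1) := by omega
        subst h2; subst h2'
        exact ⟨2 * e + 1, 2 * e + 1, e, 1, e, 1, by omega, by omega, by rw [hb1]; ring, by omega,
          by rw [hb1]; ring, by omega, by omega⟩
      · by_cases h3 : p = q
        · subst h3
          exact ⟨p, p, k, 0, k, 0, by omega, by omega, by rw [hb1]; ring, by omega, by rw [hb1]; ring,
            by omega, by omega⟩
        · obtain ⟨d, rfl⟩ : ∃ d, q = p + (d + 1) := ⟨q - p - 1, by omega⟩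
          obtain ⟨e, rfl⟩ : ∃ e, k = (d + 1) + e := ⟨k - d - 1, by omega⟩
          exact ⟨p, p, (d + 1) + e, 0, e, d + 1, by omega, by omega, by rw [hb1]; ring, by omega,
            by rw [hb1]; ring, by omega, by omega⟩
    · by_cases h3 : q = 2 * k
      · subst h3
        by_cases h4 : p + 1 = k
        · obtain ⟨e, rfl⟩ : ∃ e, k = p + 1 := ⟨0, by omega⟩
          refine ⟨2 * p + 2, 2 * p + 1, 0, p, p, 1, by omega, by omega, by rw [hb1]; ring,
            by omega, by rw [hb1]; ring, by omega, by omega⟩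
        · obtain ⟨g, rfl⟩ : ∃ g, k = p + 2 + g := ⟨k - p - 2, by omega⟩
          exact ⟨2 * p + g + 3, 2 * p + g + 3, 0, p + g + 1, p + 1, g + 1, by omega,
            by omega, by rw [hb1]; ring, by omega, by rw [hb1]; ring, by omega, by omega⟩
      · obtain ⟨f, rfl⟩ : ∃ f, q = p + k + 1 + f := ⟨q - p - k - 1, by omega⟩
        obtain ⟨e, he⟩ : ∃ e, k = f + 1 + e := ⟨k - f - 1, by omega⟩
        subst he
        exact ⟨p + (f + 1 + e) + 1 + f, p + (f + 1 + e) + 1 + f, f, e, f + 1 + e, 0,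
          by omega, by omega, by rw [hb1]; ring, by omega, by rw [hb1]; ring, by omega, by omega⟩

lemma master {b : ℕ} (hb : 3 ≤ b) {m : ℕ} (hm : m = (b - 1) ^ 2 / 2)
    (p q : ℕ) (hp : p < b) (hq : q < b) :
    ∃ s t a₁ c₁ a₂ c₂, s < b ∧ t < b ∧
      m + p = s + a₁ * (b - 1) + c₁ * b ∧
      (1 ≤ c₁ ∨ (1 ≤ a₁ ∧ p ≤ b - 2) ∨ (a₁ = 0 ∧ c₁ = 0 ∧ p ≤ s)) ∧
      m + q = t + a₂ * (b - 1) + c₂ * b ∧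
      (1 ≤ c₂ ∨ (1 ≤ a₂ ∧ q ≤ b - 2) ∨ (a₂ = 0 ∧ c₂ = 0 ∧ q ≤ t)) ∧
      (s = t ∨ ((s = b - 2 ∨ s = b - 1) ∧ (t = b - 2 ∨ t = b - 1))) := by
  rcases le_total p q with hpq | hpq
  · exact master_aux hb hm p q hp hq hpq
  · obtain ⟨s, t, a₁, c₁, a₂, c₂, hs, ht, e1, v1, e2, v2, hst⟩ :=
      master_aux hb hm q p hq hp hpq
    exact ⟨t, s, a₂, c₂, a₁, c₁, ht, hs, e2, v2, e1, v1, by tauto⟩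

lemma lift_walk {n b : ℕ} {A : Fin n → Fin b → Prop} {B : Fin b → Fin n → Prop}
    (hBA : bmul B A = Wielandt b) :
    ∀ {t : ℕ} {p s : Fin b} {i w : Fin n}, bpow (Wielandt b) t p s → A i p → B s w →
      bpow (bmul A B) (t + 1) i w := by
  intro t
  induction t with
  | zero =>
    intro p s i w hw hA hB
    have : p = s := hw
    subst this
    exact ⟨w, ⟨p, hA, hB⟩, rfl⟩
  | succ t ih =>
    intro p s i w hw hA hB
    obtain ⟨p', hstep, hrest⟩ := hw
    have hstep' : bmul B A p p' := by rw [hBA]; exact hstep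
    obtain ⟨x, hBpx, hAxp'⟩ := hstep'
    exact ⟨x, ⟨p, hA, hBpx⟩, ih hrest hAxp' hB⟩

theorem column_u_implies_scram_le {n b : ℕ} (hb : 3 ≤ b)
    (A : Fin n → Fin b → Prop) (B : Fin b → Fin n → Prop)
    (hAr : NoZeroRow A) (hAc : NoZeroCol A) (hBr : NoZeroRow B) (hBc : NoZeroCol B)
    (hBA : bmul B A = Wielandt b)
    (M : Fin n → Fin n → Prop) (hM : M = bmul A B)
    (hcol : ∃ j, ∀ i : Fin b, B i j ↔ (i.val = b - 2 ∨ i.val = b - 1))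
    (h : ℕ) (hh : h = ((b - 1) ^ 2 + 2) / 2) :
    bmul (bpow M h) (bpow (btrans M) h) = bJ ∧ scram M ≤ h := by
  have hm : h = (b - 1) ^ 2 / 2 + 1 := by
    rw [hh]
    generalize (b - 1) ^ 2 = N
    omega
  have key : ∀ i j : Fin n, ∃ w, bpow M h i w ∧ bpow (btrans M) h w j := by
    intro i j
    obtain ⟨p, hp⟩ := hAr i
    obtain ⟨q, hq⟩ := hAr j
    obtain ⟨s, t, a₁, c₁, a₂, c₂, hs, ht, e1, v1, e2, v2, hst⟩ :=
      master hb rfl p.val q.val p.isLt q.isLt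
    have walk1 : bpow (Wielandt b) ((b - 1) ^ 2 / 2) p ⟨s, hs⟩ :=
      walk_exists hb p ⟨s, hs⟩ a₁ c₁ e1 v1
    have walk2 : bpow (Wielandt b) ((b - 1) ^ 2 / 2) q ⟨t, ht⟩ :=
      walk_exists hb q ⟨t, ht⟩ a₂ c₂ e2 v2
    have hw : ∃ w, B ⟨s, hs⟩ w ∧ B ⟨t, ht⟩ w := by
      rcases hst with hst | ⟨hs2, ht2⟩
      · subst hst
        obtain ⟨w, hw⟩ := hBr ⟨s, hs⟩
        exact ⟨w, hw, hw⟩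
      · obtain ⟨j₀, hj₀⟩ := hcol
        exact ⟨j₀, (hj₀ ⟨s, hs⟩).mpr hs2, (hj₀ ⟨t, ht⟩).mpr ht2⟩
    obtain ⟨w, hBs, hBt⟩ := hw
    have m1 : bpow (bmul A B) ((b - 1) ^ 2 / 2 + 1) i w := lift_walk hBA walk1 hp hBs
    have m2 : bpow (bmul A B) ((b - 1) ^ 2 / 2 + 1) j w := lift_walk hBA walk2 hq hBt
    rw [← hM, ← hm] at m1 m2
    exact ⟨w, m1, bpow_rev m2⟩
  have main : bmul (bpow M h) (bpow (btrans M) h) = bJ := by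
    funext i j
    exact eq_true (key i j)
  exact ⟨main, Nat.sInf_le ⟨by omega, main⟩⟩
end
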